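/- arXiv:1803.02060 — 7 statements merged into one kernel-verified Lean document; each statement's English description precedes it below -/
import Mathlib

section
/- Let X be a finite-dimensional complex normed space, let P be a total cone in X, and let A be a positive bounded linear operator on X. Then the spectral radius r_σ(A) is an eigenvalue of A and there exists an eigenvector w ∈ P, w ≠ θ, with A w = r_σ(A) w. -/
/-- A cone in a complex normed space. -/
def IsCone {X : Type*} [NormedAddCommGroup X] [NormedSpace ℂ X] (P : Set X) : Prop :=
  IsClosed P ∧ Convex ℝ P ∧ P ≠ {0} ∧
    (∀ s : ℝ, 0 ≤ s → ∀ x ∈ P, s • x ∈ P) ∧ P ∩ (-P) = {0}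

/-- A cone is total if `closure (P - P) = X`. -/
def IsTotalCone {X : Type*} [NormedAddCommGroup X] [NormedSpace ℂ X] (P : Set X) : Prop :=
  IsCone P ∧ closure {z : X | ∃ x ∈ P, ∃ y ∈ P, z = x - y} = Set.univ

open Filter Topology

section Aux

variable {X : Type*} [NormedAddCommGroup X] [NormedSpace ℂ X] [FiniteDimensional ℂ X]

lemma KR.add_mem {P : Set X} (hconv : Convex ℝ P)
    (hsmul : ∀ s : ℝ, 0 ≤ s → ∀ x ∈ P, s • x ∈ P) :
    ∀ x ∈ P, ∀ y ∈ P, x + y ∈ P := by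
  intro x hx y hy
  have h := hconv hx hy (by norm_num : (0:ℝ) ≤ 1/2) (by norm_num : (0:ℝ) ≤ 1/2)
    (by norm_num : (1/2:ℝ) + 1/2 = 1)
  have h2 := hsmul 2 (by norm_num) _ h
  have : (2:ℝ) • ((1/2:ℝ) • x + (1/2:ℝ) • y) = x + y := by
    module
  rwa [this] at h2

lemma KR.decomp {P : Set X} (h0 : (0:X) ∈ P)
    (hadd : ∀ x ∈ P, ∀ y ∈ P, x + y ∈ P)
    (hsmul : ∀ s : ℝ, 0 ≤ s → ∀ x ∈ P, s • x ∈ P)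
    (hdense : closure {z : X | ∃ x ∈ P, ∃ y ∈ P, z = x - y} = Set.univ) :
    ∀ z : X, ∃ x ∈ P, ∃ y ∈ P, z = x - y := by
  haveI : FiniteDimensional ℝ X := Module.Finite.trans ℂ X
  let S : Submodule ℝ X :=
    { carrier := {z : X | ∃ x ∈ P, ∃ y ∈ P, z = x - y}
      add_mem' := by
        rintro a b ⟨x1, hx1, y1, hy1, rfl⟩ ⟨x2, hx2, y2, hy2, rfl⟩
        exact ⟨x1 + x2, hadd _ hx1 _ hx2, y1 + y2, hadd _ hy1 _ hy2, by abel⟩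
      zero_mem' := ⟨0, h0, 0, h0, by simp⟩
      smul_mem' := by
        rintro c a ⟨x, hx, y, hy, rfl⟩
        rcases le_or_gt 0 c with hc | hc
        · exact ⟨c • x, hsmul c hc x hx, c • y, hsmul c hc y hy, by module⟩
        · exact ⟨(-c) • y, hsmul _ (by linarith) y hy, (-c) • x, hsmul _ (by linarith) x hx,
            by module⟩ }
  have hclosed : IsClosed (S : Set X) := S.closed_of_finiteDimensional
  have huniv : (S : Set X) = Set.univ := by
    rw [← hclosed.closure_eq]
    exact hdense
  intro z
  have hz : z ∈ (S : Set X) := huniv ▸ Set.mem_univ z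
  exact hz

/-- Existence of a uniformly positive continuous functional on a pointed closed convex cone. -/
lemma KR.exists_functional {P : Set X} (hclosed : IsClosed P) (hconv : Convex ℝ P)
    (hsmul : ∀ s : ℝ, 0 ≤ s → ∀ x ∈ P, s • x ∈ P) (hpointed : P ∩ (-P) = {0})
    (h0 : (0:X) ∈ P) (hne : ∃ p ∈ P, p ≠ 0) :
    ∃ φ : X →L[ℝ] ℝ, ∃ c : ℝ, 0 < c ∧ ∀ x ∈ P, c * ‖x‖ ≤ φ x := by
  haveI : FiniteDimensional ℝ X := Module.Finite.trans ℂ X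
  haveI : ProperSpace X := FiniteDimensional.proper ℝ X
  -- step 1: for every nonzero x ∈ P there is a functional nonneg on P and positive at x
  have step1 : ∀ x ∈ P, x ≠ 0 → ∃ g : X →L[ℝ] ℝ, (∀ y ∈ P, 0 ≤ g y) ∧ 0 < g x := by
    intro x hx hx0
    have hnx : -x ∉ P := by
      intro hmem
      apply hx0
      have : x ∈ P ∩ (-P) := ⟨hx, by simpa [Set.mem_neg] using hmem⟩
      rwa [hpointed, Set.mem_singleton_iff] at this
    obtain ⟨f, u, hfu, hux⟩ := geometric_hahn_banach_closed_point hconv hclosed hnx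
    have hu0 : 0 < u := by simpa using hfu 0 h0
    have hfP : ∀ y ∈ P, f y ≤ 0 := by
      intro y hy
      by_contra hpos
      push_neg at hpos
      have ht : (0:ℝ) ≤ (u + 1) / f y := by positivity
      have := hfu _ (hsmul _ ht y hy)
      rw [map_smul, smul_eq_mul, div_mul_cancel₀ _ (ne_of_gt hpos)] at this
      linarith
    refine ⟨-f, fun y hy => ?_, ?_⟩
    · simpa using hfP y hy
    · have : f (-x) = -f x := by rw [map_neg]
      rw [this] at hux
      simp only [ContinuousLinearMap.neg_apply]
      linarith
  -- step 2: compactness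
  set S₁ : Set X := P ∩ Metric.sphere (0:X) 1 with hS₁
  have hS₁compact : IsCompact S₁ := (isCompact_sphere (0:X) 1).inter_left hclosed
  have hS₁sub : ∀ z ∈ S₁, z ∈ P ∧ ‖z‖ = 1 := by
    intro z hz
    exact ⟨hz.1, by simpa [mem_sphere_zero_iff_norm] using hz.2⟩
  have hS₁ne : S₁.Nonempty := by
    obtain ⟨p, hp, hp0⟩ := hne
    refine ⟨‖p‖⁻¹ • p, hsmul _ (by positivity) p hp, ?_⟩
    rw [mem_sphere_zero_iff_norm]
    exact norm_smul_inv_norm hp0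
  -- choose functionals
  have hgex : ∀ z : S₁, ∃ g : X →L[ℝ] ℝ, (∀ y ∈ P, 0 ≤ g y) ∧ 0 < g (z : X) := by
    rintro ⟨z, hz⟩
    exact step1 z (hS₁sub z hz).1 (by
      intro h
      have := (hS₁sub z hz).2
      rw [h] at this
      simp at this)
  choose g hg1 hg2 using hgex
  have hcover : S₁ ⊆ ⋃ z : S₁, {y : X | 0 < g z y} := by
    intro y hy
    exact Set.mem_iUnion.mpr ⟨⟨y, hy⟩, hg2 ⟨y, hy⟩⟩
  obtain ⟨t, ht⟩ := hS₁compact.elim_finite_subcover (fun z : S₁ => {y : X | 0 < g z y})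
    (fun z => isOpen_lt continuous_const (g z).continuous) hcover
  set φ : X →L[ℝ] ℝ := ∑ z ∈ t, g z with hφdef
  have hφP : ∀ y ∈ P, 0 ≤ φ y := by
    intro y hy
    rw [hφdef]
    simp only [ContinuousLinearMap.coe_sum', Finset.sum_apply]
    exact Finset.sum_nonneg fun z _ => hg1 z y hy
  have hφpos : ∀ y ∈ S₁, 0 < φ y := by
    intro y hy
    obtain ⟨z, hzt, hzy⟩ := Set.mem_iUnion₂.mp (ht hy)
    rw [hφdef]
    simp only [ContinuousLinearMap.coe_sum', Finset.sum_apply]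
    exact Finset.sum_pos' (fun i _ => hg1 i y (hS₁sub y hy).1) ⟨z, hzt, hzy⟩
  -- step 3: minimum
  obtain ⟨z₀, hz₀S, hz₀min⟩ := hS₁compact.exists_isMinOn hS₁ne φ.continuous.continuousOn
  refine ⟨φ, φ z₀, hφpos z₀ hz₀S, ?_⟩
  intro x hx
  rcases eq_or_ne x 0 with rfl | hx0
  · simp
  · have hxS : ‖x‖⁻¹ • x ∈ S₁ :=
      ⟨hsmul _ (by positivity) x hx, by
        rw [mem_sphere_zero_iff_norm]; exact norm_smul_inv_norm hx0⟩
    have := hz₀min hxS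
    have hrw : φ x = ‖x‖ * φ (‖x‖⁻¹ • x) := by
      rw [map_smul, smul_eq_mul, ← mul_assoc, mul_inv_cancel₀ (norm_ne_zero_iff.mpr hx0), one_mul]
    rw [hrw, mul_comm (φ z₀) ‖x‖]
    exact mul_le_mul_of_nonneg_left this (norm_nonneg x)

/-- Every spectral value of an operator on a finite-dimensional space is an eigenvalue. -/
lemma KR.exists_eigenvector {μ : ℂ} (A : X →L[ℂ] X) (hμ : μ ∈ spectrum ℂ A) :
    ∃ z : X, z ≠ 0 ∧ A z = μ • z := by
  haveI : CompleteSpace X := FiniteDimensional.complete ℂ X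
  by_contra hcon
  push_neg at hcon
  set B : X →L[ℂ] X := algebraMap ℂ (X →L[ℂ] X) μ - A with hB
  have hBapp : ∀ x : X, B x = μ • x - A x := by
    intro x
    rw [hB]
    simp [Algebra.algebraMap_eq_smul_one]
  have hinj : Function.Injective B := by
    intro a b hab
    by_contra hne
    have hab0 : a - b ≠ 0 := sub_ne_zero.mpr hne
    have : B (a - b) = 0 := by rw [show B (a - b) = B a - B b from map_sub B a b, hab, sub_self]
    rw [hBapp, sub_eq_zero] at this
    exact hcon (a - b) hab0 this.symm
  have hsurj : Function.Surjective B := by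
    have : Function.Injective (B : X →ₗ[ℂ] X) := hinj
    simpa using LinearMap.injective_iff_surjective.mp this
  have hbij : Function.Bijective (B : X →ₗ[ℂ] X) := ⟨hinj, hsurj⟩
  let e : X ≃ₗ[ℂ] X := LinearEquiv.ofBijective (B : X →ₗ[ℂ] X) hbij
  let E : X ≃L[ℂ] X := e.toContinuousLinearEquiv
  have hunit : IsUnit B := by
    refine ⟨⟨B, E.symm.toContinuousLinearMap, ?_, ?_⟩, rfl⟩
    · ext x
      simp only [ContinuousLinearMap.mul_apply, ContinuousLinearMap.one_apply,
        ContinuousLinearEquiv.coe_coe]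
      exact (show B (E.symm x) = e (e.symm x) from rfl).trans (e.apply_symm_apply x)
    · ext x
      simp only [ContinuousLinearMap.mul_apply, ContinuousLinearMap.one_apply,
        ContinuousLinearEquiv.coe_coe]
      exact (show E.symm.toContinuousLinearMap (B x) = e.symm (e x) from rfl).trans
        (e.symm_apply_apply x)
  rw [spectrum.mem_iff] at hμ
  exact hμ hunit

/-- Gelfand formula consequence: eventual norm bound. -/
lemma KR.eventually_norm_pow_le (A : X →L[ℂ] X) (hfin : spectralRadius ℂ A ≠ ⊤) {ρ : ℝ}
    (hρ : (spectralRadius ℂ A).toReal < ρ) : ∃ N : ℕ, ∀ n ≥ N, n ≠ 0 → ‖A ^ n‖ ≤ ρ ^ n := by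
  haveI : CompleteSpace X := FiniteDimensional.complete ℂ X
  have h0 : (0:ℝ) ≤ ρ := le_trans ENNReal.toReal_nonneg hρ.le
  have hlt : spectralRadius ℂ A < ENNReal.ofReal ρ := by
    rwa [ENNReal.lt_ofReal_iff_toReal_lt hfin]
  have hev := (spectrum.pow_nnnorm_pow_one_div_tendsto_nhds_spectralRadius A).eventually_lt_const hlt
  rw [Filter.eventually_atTop] at hev
  obtain ⟨N, hN⟩ := hev
  refine ⟨N, fun n hn hn0 => ?_⟩
  have h2 := hN n hn
  have h3 : ((‖A ^ n‖₊ : ENNReal) ^ (1 / (n:ℝ))) ^ (n : ℝ) ≤ (ENNReal.ofReal ρ) ^ (n : ℝ) :=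
    ENNReal.rpow_le_rpow h2.le (by positivity)
  rw [← ENNReal.rpow_mul, one_div, inv_mul_cancel₀ (by exact_mod_cast hn0), ENNReal.rpow_one] at h3
  rw [ENNReal.rpow_natCast, ← ENNReal.ofReal_pow h0] at h3
  have h4 := ENNReal.toReal_mono (by simp) h3
  rw [ENNReal.toReal_ofReal (by positivity)] at h4
  simpa using h4

end Aux

/-- complex Perron–Frobenius, existence part: for a positive operator `A`
on a finite-dimensional complex normed space with a total cone `P`, the spectral radius
`r_σ(A)` is an eigenvalue of `A` with an eigenvector in `P`. -/
theorem spectralRadius_is_eigenvalue_with_eigenvector_in_cone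
    {X : Type*} [NormedAddCommGroup X] [NormedSpace ℂ X] [FiniteDimensional ℂ X]
    (P : Set X) (hP : IsTotalCone P)
    (A : X →L[ℂ] X) (hA : ∀ x ∈ P, A x ∈ P) :
    ∃ w ∈ P, w ≠ 0 ∧ A w = (((spectralRadius ℂ A).toReal : ℂ)) • w := by
  obtain ⟨⟨hclosed, hconv, hne, hsmul, hpointed⟩, hdense⟩ := hP
  haveI : CompleteSpace X := FiniteDimensional.complete ℂ X
  haveI : FiniteDimensional ℝ X := Module.Finite.trans ℂ X
  haveI : ProperSpace X := FiniteDimensional.proper ℝ X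
  have h0P : (0:X) ∈ P := by
    have : (0:X) ∈ P ∩ (-P) := by rw [hpointed]; rfl
    exact this.1
  have hadd := KR.add_mem hconv hsmul
  obtain ⟨p, hpP, hp0⟩ : ∃ p ∈ P, p ≠ 0 := by
    by_contra h
    push_neg at h
    exact hne (Set.Subset.antisymm (fun x hx => h x hx) (by simp [h0P]))
  haveI : Nontrivial X := ⟨p, 0, hp0⟩
  haveI : Nontrivial (X →L[ℂ] X) := by
    refine ⟨1, 0, fun h => hp0 ?_⟩
    have := ContinuousLinearMap.ext_iff.mp h p
    simpa using this
  -- spectral radius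
  set r : ℝ := (spectralRadius ℂ A).toReal with hrdef
  have hr0 : 0 ≤ r := ENNReal.toReal_nonneg
  obtain ⟨μ, hμmem, hμr⟩ := spectrum.exists_nnnorm_eq_spectralRadius A
  have hfin : spectralRadius ℂ A ≠ ⊤ := by rw [← hμr]; exact ENNReal.coe_ne_top
  have hrμ : r = ‖μ‖ := by
    rw [hrdef, ← hμr, ENNReal.coe_toReal, coe_nnnorm]
  -- powers of A preserve P
  have hAn : ∀ n : ℕ, ∀ x ∈ P, (A ^ n) x ∈ P := by
    intro n
    induction n with
    | zero => intro x hx; simpa using hx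
    | succ n ih =>
      intro x hx
      rw [pow_succ, ContinuousLinearMap.mul_apply]
      exact ih _ (hA x hx)
  -- positive functional
  obtain ⟨φ, c, hc, hφ⟩ := KR.exists_functional hclosed hconv hsmul hpointed h0P ⟨p, hpP, hp0⟩
  have hφ0 : ∀ x ∈ P, 0 ≤ φ x := fun x hx => le_trans (by positivity) (hφ x hx)
  -- key lower bound
  obtain ⟨u, huP, c', hc', hkey⟩ :
      ∃ u ∈ P, ∃ c' : ℝ, 0 < c' ∧ ∀ n : ℕ, c' * r ^ n ≤ φ ((A ^ n) u) := by
    rcases eq_or_lt_of_le hr0 with hr | hr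
    · -- r = 0
      refine ⟨p, hpP, φ p, lt_of_lt_of_le (mul_pos hc (norm_pos_iff.mpr hp0)) (hφ p hpP), fun n => ?_⟩
      cases n with
      | zero => simp
      | succ n =>
        rw [← hr, zero_pow (Nat.succ_ne_zero n), mul_zero]
        exact hφ0 _ (hAn _ _ hpP)
    · -- r > 0
      obtain ⟨z, hz0, hzA⟩ := KR.exists_eigenvector A hμmem
      obtain ⟨v1, hv1, v2, hv2, hzdec⟩ := KR.decomp h0P hadd hsmul hdense z
      obtain ⟨ψ, hψ1, hψz⟩ := exists_dual_vector ℂ z (norm_ne_zero_iff.mpr hz0)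
      refine ⟨v1 + v2, hadd _ hv1 _ hv2, c * ‖z‖, mul_pos hc (norm_pos_iff.mpr hz0), fun n => ?_⟩
      have hAnz : (A ^ n) z = μ ^ n • z := by
        induction n with
        | zero => simp
        | succ m ih =>
          rw [pow_succ, ContinuousLinearMap.mul_apply, hzA, map_smul, ih, smul_smul, pow_succ,
            mul_comm]
      have h1 : ‖ψ ((A ^ n) z)‖ = r ^ n * ‖z‖ := by
        rw [hAnz, map_smul, smul_eq_mul, hψz, norm_mul, norm_pow, hrμ]
        simp
      have h2 : ‖ψ ((A ^ n) z)‖ ≤ ‖(A ^ n) v1‖ + ‖(A ^ n) v2‖ := by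
        have : (A ^ n) z = (A ^ n) v1 - (A ^ n) v2 := by rw [hzdec, map_sub]
        rw [this, map_sub]
        refine le_trans (norm_sub_le _ _) (add_le_add ?_ ?_) <;>
        · refine le_trans (ψ.le_opNorm _) ?_
          rw [hψ1, one_mul]
      have h3 : c * ‖(A ^ n) v1‖ ≤ φ ((A ^ n) v1) := hφ _ (hAn n _ hv1)
      have h4 : c * ‖(A ^ n) v2‖ ≤ φ ((A ^ n) v2) := hφ _ (hAn n _ hv2)
      have h5 : φ ((A ^ n) (v1 + v2)) = φ ((A ^ n) v1) + φ ((A ^ n) v2) := by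
        rw [map_add, map_add]
      rw [h5]
      nlinarith [h1, h2, norm_nonneg ((A ^ n) v1), norm_nonneg ((A ^ n) v2)]
  have hφu : c' ≤ φ u := by simpa using hkey 0
  have hφne : φ ≠ 0 := by
    intro h
    rw [h] at hφu
    simp at hφu
    linarith
  have hφnorm : 0 < ‖φ‖ := by
    rcases (norm_nonneg φ).lt_or_eq with h | h
    · exact h
    · exact absurd (ContinuousLinearMap.opNorm_zero_iff φ |>.mp h.symm) hφne
  -- main approximation step
  have hstep : ∀ lam : ℝ, r < lam →
      ∃ v ∈ P, c' * (lam - r)⁻¹ ≤ φ v ∧ (lam : ℂ) • v - A v = u := by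
    intro lam hlam
    have hlam0 : 0 < lam := lt_of_le_of_lt hr0 hlam
    obtain ⟨ρ, hρr, hρlam⟩ : ∃ ρ : ℝ, r < ρ ∧ ρ < lam := ⟨(r + lam) / 2, by linarith, by linarith⟩
    have hρ0 : 0 ≤ ρ := le_trans hr0 hρr.le
    obtain ⟨N, hN⟩ := KR.eventually_norm_pow_le A hfin (by rw [← hrdef]; exact hρr)
    set f : ℕ → X := fun n => ((lam : ℂ) ^ (n + 1))⁻¹ • (A ^ n) u with hf
    have hfreal : ∀ n, f n = ((lam ^ (n + 1))⁻¹ : ℝ) • (A ^ n) u := by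
      intro n
      show ((lam : ℂ) ^ (n + 1))⁻¹ • (A ^ n) u = ((lam ^ (n + 1))⁻¹ : ℝ) • (A ^ n) u
      rw [show ((lam : ℂ) ^ (n + 1))⁻¹ = (((lam ^ (n + 1))⁻¹ : ℝ) : ℂ) by push_cast; ring]
      rw [Complex.coe_smul]
    have hsummable : Summable f := by
      apply Summable.of_norm_bounded_eventually (g := fun n => (‖u‖ / lam) * (ρ / lam) ^ n)
      · exact (summable_geometric_of_lt_one (by positivity)
          (by rw [div_lt_one hlam0]; exact hρlam)).mul_left _
      · rw [Nat.cofinite_eq_atTop]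
        filter_upwards [eventually_ge_atTop (N + 1)] with n hn
        have hn0 : n ≠ 0 := by omega
        have h1 : ‖f n‖ = (lam ^ (n + 1))⁻¹ * ‖(A ^ n) u‖ := by
          rw [hfreal n, norm_smul, Real.norm_eq_abs, abs_of_nonneg (by positivity)]
        have h2 : ‖(A ^ n) u‖ ≤ ρ ^ n * ‖u‖ := by
          refine le_trans ((A ^ n).le_opNorm u) ?_
          exact mul_le_mul_of_nonneg_right (hN n (by omega) hn0) (norm_nonneg u)
        rw [h1]
        calc (lam ^ (n + 1))⁻¹ * ‖(A ^ n) u‖ ≤ (lam ^ (n + 1))⁻¹ * (ρ ^ n * ‖u‖) := by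
              exact mul_le_mul_of_nonneg_left h2 (by positivity)
          _ = (‖u‖ / lam) * (ρ / lam) ^ n := by
              rw [div_pow, pow_succ, mul_inv]
              field_simp
    set v : X := ∑' n, f n with hv
    have hfP : ∀ n, f n ∈ P := by
      intro n
      rw [hfreal n]
      exact hsmul _ (by positivity) _ (hAn n u huP)
    refine ⟨v, ?_, ?_, ?_⟩
    · -- v ∈ P
      apply hclosed.mem_of_tendsto hsummable.hasSum.tendsto_sum_nat
      filter_upwards with M
      exact Finset.sum_induction f (· ∈ P) (fun a b ha hb => hadd a ha b hb) h0P
        (fun n _ => hfP n)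
    · -- φ lower bound
      have hmap := hsummable.hasSum.mapL φ
      have hφv : φ v = ∑' n, φ (f n) := by
        rw [hv]
        exact φ.map_tsum hsummable
      have hterm : ∀ n : ℕ, (c' / lam) * (r / lam) ^ n ≤ φ (f n) := by
        intro n
        have hfn : φ (f n) = (lam ^ (n + 1))⁻¹ * φ ((A ^ n) u) := by
          rw [hfreal n, map_smul, smul_eq_mul]
        rw [hfn]
        have := hkey n
        calc (c' / lam) * (r / lam) ^ n = (lam ^ (n + 1))⁻¹ * (c' * r ^ n) := by
              rw [div_pow, pow_succ, mul_inv, div_mul_div_comm, div_eq_mul_inv, mul_inv]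
              ring
          _ ≤ (lam ^ (n + 1))⁻¹ * φ ((A ^ n) u) :=
              mul_le_mul_of_nonneg_left this (by positivity)
      have hgeo : Summable (fun n : ℕ => (c' / lam) * (r / lam) ^ n) :=
        (summable_geometric_of_lt_one (by positivity)
          (by rw [div_lt_one hlam0]; exact hlam)).mul_left _
      have hsum_eq : ∑' n : ℕ, (c' / lam) * (r / lam) ^ n = c' * (lam - r)⁻¹ := by
        rw [tsum_mul_left, tsum_geometric_of_lt_one (by positivity)
          (by rw [div_lt_one hlam0]; exact hlam)]
        rw [show 1 - r / lam = (lam - r) / lam by field_simp]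
        rw [inv_div]
        field_simp
      have hle := Summable.tsum_le_tsum hterm hgeo hmap.summable
      rw [hsum_eq] at hle
      rw [hφv]
      exact hle
    · -- the resolvent identity
      have hlamC : (lam : ℂ) ≠ 0 := by exact_mod_cast hlam0.ne'
      have hAf : ∀ n, A (f n) = (lam : ℂ) • f (n + 1) := by
        intro n
        show A (((lam : ℂ) ^ (n + 1))⁻¹ • (A ^ n) u) = (lam : ℂ) • ((lam : ℂ) ^ ((n + 1) + 1))⁻¹ • (A ^ (n + 1)) u
        rw [A.map_smul, smul_smul]
        congr 1
        · rw [show (n + 1) + 1 = n + 2 from rfl]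
          rw [pow_succ ((lam:ℂ)) (n+1)]
          field_simp
        · rw [← ContinuousLinearMap.mul_apply, ← pow_succ']
      have hshift : Summable (fun n => f (n + 1)) := (summable_nat_add_iff 1).mpr hsummable
      have hAv : A v = (lam : ℂ) • (v - f 0) := by
        rw [hv, A.map_tsum hsummable]
        have h1 : ∑' n, A (f n) = ∑' n, (lam : ℂ) • f (n + 1) := by
          congr 1
          funext n
          exact hAf n
        rw [h1, (hshift.hasSum.const_smul ((lam:ℂ))).tsum_eq]
        congr 1
        have := hsummable.tsum_eq_zero_add
        rw [this]
        abel
      rw [hAv]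
      have hf0 : (lam : ℂ) • f 0 = u := by
        show (lam : ℂ) • ((lam : ℂ) ^ (0 + 1))⁻¹ • (A ^ 0) u = u
        rw [zero_add, pow_one, smul_smul, mul_inv_cancel₀ hlamC, one_smul]
        simp
      rw [smul_sub, hf0]
      abel
  -- take a sequence of lam's decreasing to r
  set lamseq : ℕ → ℝ := fun k => r + ((k : ℝ) + 1)⁻¹ with hlamseq
  have hlamk : ∀ k, r < lamseq k := fun k => lt_add_of_pos_right _ (by positivity)
  choose v hvP hvφ hveq using fun k => hstep (lamseq k) (hlamk k)
  have hφv : ∀ k : ℕ, c' * ((k : ℝ) + 1) ≤ φ (v k) := by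
    intro k
    have := hvφ k
    rwa [show lamseq k - r = ((k : ℝ) + 1)⁻¹ by simp [hlamseq], inv_inv] at this
  have hvnorm : ∀ k : ℕ, c' * ((k : ℝ) + 1) ≤ ‖φ‖ * ‖v k‖ := by
    intro k
    refine le_trans (hφv k) (le_trans (le_abs_self _) ?_)
    rw [← Real.norm_eq_abs]
    exact φ.le_opNorm _
  have hv0 : ∀ k : ℕ, v k ≠ 0 := by
    intro k h
    have := hφv k
    rw [h, map_zero] at this
    nlinarith [Nat.cast_nonneg (α := ℝ) k]
  set w : ℕ → X := fun k => ‖v k‖⁻¹ • v k with hw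
  have hwP : ∀ k, w k ∈ P := fun k => hsmul _ (by positivity) _ (hvP k)
  have hwsph : ∀ k, w k ∈ Metric.sphere (0:X) 1 := by
    intro k
    rw [mem_sphere_zero_iff_norm]
    exact norm_smul_inv_norm (hv0 k)
  obtain ⟨wlim, hwlims, σ, hσ, hconvg⟩ := (isCompact_sphere (0:X) 1).tendsto_subseq hwsph
  refine ⟨wlim, ?_, ?_, ?_⟩
  · exact hclosed.mem_of_tendsto hconvg (Eventually.of_forall fun j => hwP (σ j))
  · intro h
    rw [h, mem_sphere_zero_iff_norm] at hwlims
    simp at hwlims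
  · -- the eigenvalue equation
    have heqk : ∀ k : ℕ, A (w k) = ((lamseq k : ℝ) : ℂ) • w k - (‖v k‖⁻¹ : ℝ) • u := by
      intro k
      have hid := hveq k
      have hAvk : A (v k) = ((lamseq k : ℝ) : ℂ) • v k - u := by
        rw [← hid]; abel
      rw [hw]
      simp only
      rw [A.map_smul_of_tower, hAvk, smul_sub, smul_comm]
    have hlim1 : Tendsto (fun j => A (w (σ j))) atTop (𝓝 (A wlim)) :=
      (A.continuous.tendsto _).comp hconvg
    have hlamten : Tendsto lamseq atTop (𝓝 r) := by
      have h1 : Tendsto (fun k : ℕ => ((k : ℝ) + 1)⁻¹) atTop (𝓝 0) := by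
        have := tendsto_one_div_add_atTop_nhds_zero_nat (𝕜 := ℝ)
        simpa [one_div] using this
      have := tendsto_const_nhds (x := r) (f := atTop (α := ℕ)) |>.add h1
      simpa using this
    have hlim2 : Tendsto (fun j => ((lamseq (σ j) : ℝ) : ℂ) • w (σ j)) atTop
        (𝓝 (((r : ℝ) : ℂ) • wlim)) := by
      refine Tendsto.smul ?_ hconvg
      exact (Complex.continuous_ofReal.tendsto r).comp (hlamten.comp hσ.tendsto_atTop)
    have hlim3 : Tendsto (fun j => (‖v (σ j)‖⁻¹ : ℝ) • u) atTop (𝓝 (0:X)) := by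
      have hbound : ∀ j : ℕ,
          ‖(‖v (σ j)‖⁻¹ : ℝ) • u‖ ≤ ‖φ‖ * ‖u‖ * (c' * ((j : ℝ) + 1))⁻¹ := by
        intro j
        rw [norm_smul, Real.norm_eq_abs, abs_of_nonneg (by positivity)]
        have h1 : c' * ((σ j : ℝ) + 1) ≤ ‖φ‖ * ‖v (σ j)‖ := hvnorm (σ j)
        have h2 : (j : ℝ) + 1 ≤ (σ j : ℝ) + 1 := by
          have : j ≤ σ j := hσ.le_apply
          exact_mod_cast by exact_mod_cast add_le_add_left (Nat.cast_le.mpr this) 1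
        have hvpos : 0 < ‖v (σ j)‖ := norm_pos_iff.mpr (hv0 (σ j))
        have h3 : c' * ((j : ℝ) + 1) ≤ ‖φ‖ * ‖v (σ j)‖ := by nlinarith
        rw [show ‖v (σ j)‖⁻¹ * ‖u‖ = ‖u‖ / ‖v (σ j)‖ by ring,
          show ‖φ‖ * ‖u‖ * (c' * ((j : ℝ) + 1))⁻¹ = (‖φ‖ * ‖u‖) / (c' * ((j : ℝ) + 1)) by ring,
          div_le_div_iff₀ hvpos (by positivity)]
        nlinarith [norm_nonneg u]
      have h1 : Tendsto (fun j : ℕ => (c' * ((j : ℝ) + 1))⁻¹) atTop (𝓝 0) := by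
        apply Tendsto.inv_tendsto_atTop
        apply Tendsto.const_mul_atTop hc'
        exact tendsto_atTop_add_const_right _ _ tendsto_natCast_atTop_atTop
      have h2 := h1.const_mul (‖φ‖ * ‖u‖)
      rw [mul_zero] at h2
      exact squeeze_zero_norm hbound h2
    have hlimRHS : Tendsto (fun j => ((lamseq (σ j) : ℝ) : ℂ) • w (σ j)
        - (‖v (σ j)‖⁻¹ : ℝ) • u) atTop (𝓝 (((r : ℝ) : ℂ) • wlim - 0)) := hlim2.sub hlim3
    have heq2 : (fun j => ((lamseq (σ j) : ℝ) : ℂ) • w (σ j) - (‖v (σ j)‖⁻¹ : ℝ) • u)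
        = fun j => A (w (σ j)) := by
      funext j
      rw [heqk]
    rw [heq2] at hlimRHS
    have := tendsto_nhds_unique hlim1 hlimRHS
    rw [this, sub_zero]
end

section
/- Let X be a finite-dimensional complex normed space, let P be a solid cone in X, and let A be a rotationally strongly positive bounded linear operator on X. Then P contains no generalized eigenvector of A associated with any eigenvalue μ ≠ r_σ(A): if x ≠ θ and (A − μ)^k x = θ for some k ≥ 1 and some μ ∈ ℂ with μ ≠ r_σ(A), then x ∉ P. -/
/-- A solid cone: a cone with nonempty interior. -/
def IsSolidCone {X : Type*} [NormedAddCommGroup X] [NormedSpace ℂ X] (P : Set X) : Prop :=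
  IsCone P ∧ (interior P).Nonempty

/-- Rotational strong positivity of a complex operator with respect to a cone `P`. -/
def IsRotStronglyPositive {X : Type*} [NormedAddCommGroup X] [NormedSpace ℂ X]
    (P : Set X) (A : X →L[ℂ] X) : Prop :=
  (∀ x ∈ P, A x ∈ P) ∧ ∀ x ∈ P, x ≠ 0 → ∃ z : ℂ, z • (A x) ∈ interior P

set_option linter.unusedSectionVars false

open Real
open scoped ENNReal NNReal

lemma core_cos_neg {θ ψ : ℝ} (hθ0 : 0 < θ) (hθπ : θ ≤ π) (hψ : |ψ| < π/2) :
    ∃ n : ℕ, Real.cos (n * θ + ψ) < 0 := by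
  rw [abs_lt] at hψ
  set L : ℝ := π/2 - ψ with hL
  have hL0 : 0 < L := by simp [hL]; linarith [hψ.2]
  have hLπ : L < π := by
    have := Real.pi_pos
    simp [hL]; linarith [hψ.1]
  refine ⟨⌊L/θ⌋₊ + 1, ?_⟩
  have h1 : L < (⌊L/θ⌋₊ + 1 : ℕ) * θ := by
    have := Nat.lt_floor_add_one (L/θ)
    have h2 : L/θ * θ < ((⌊L/θ⌋₊ : ℝ) + 1) * θ := by
      exact mul_lt_mul_of_pos_right this hθ0
    rw [div_mul_cancel₀] at h2
    · push_cast; linarith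
    · exact ne_of_gt hθ0
  have h2 : ((⌊L/θ⌋₊ + 1 : ℕ) : ℝ) * θ < L + π := by
    have hfl : (⌊L/θ⌋₊ : ℝ) * θ ≤ L := by
      have := Nat.floor_le (by positivity : (0:ℝ) ≤ L/θ)
      calc (⌊L/θ⌋₊ : ℝ) * θ ≤ (L/θ) * θ := mul_le_mul_of_nonneg_right this hθ0.le
        _ = L := div_mul_cancel₀ _ (ne_of_gt hθ0)
    rcases lt_or_eq_of_le hθπ with h | h
    · push_cast; linarith
    · have : ⌊L/θ⌋₊ = 0 := by
        apply Nat.floor_eq_zero.mpr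
        rw [div_lt_one hθ0, h]
        exact hLπ
      rw [this]
      push_cast
      rw [h]
      linarith
  apply Real.cos_neg_of_pi_div_two_lt_of_lt
  · have : π/2 = L + ψ := by simp [hL]
    rw [this]; linarith
  · have : π + π/2 = L + π + ψ := by simp [hL]; ring
    rw [this]; linarith

lemma core_re_neg {c : ℂ} (hc : ‖c‖ = 1) (harg : 0 < c.arg) {w : ℂ}
    (hw : 0 < w.re) : ∃ n : ℕ, (c ^ n * w).re < 0 := by
  have hwne : w ≠ 0 := by
    intro h; rw [h] at hw; simp at hw
  have hψ : |w.arg| < π/2 := Complex.abs_arg_lt_pi_div_two_iff.mpr (Or.inl hw)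
  obtain ⟨n, hn⟩ := core_cos_neg harg (Complex.arg_le_pi c) hψ
  refine ⟨n, ?_⟩
  have hcexp : c = Complex.exp (c.arg * Complex.I) := by
    conv_lhs => rw [← Complex.norm_mul_exp_arg_mul_I c]
    rw [hc]; simp
  have hwexp : w = (‖w‖ : ℂ) * Complex.exp (w.arg * Complex.I) :=
    (Complex.norm_mul_exp_arg_mul_I w).symm
  have key : (c ^ n * w).re = ‖w‖ * Real.cos (n * c.arg + w.arg) := by
    nth_rewrite 1 [hcexp]
    nth_rewrite 1 [hwexp]
    rw [← Complex.exp_nat_mul, ← mul_assoc, mul_comm (Complex.exp ((n : ℂ) * ((c.arg : ℂ) * Complex.I))) ((‖w‖ : ℂ)), mul_assoc, ← Complex.exp_add,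
      show ((n : ℂ) * ((c.arg : ℂ) * Complex.I) + (w.arg : ℂ) * Complex.I)
        = (((n * c.arg + w.arg : ℝ)) : ℂ) * Complex.I by push_cast; ring,
      Complex.re_ofReal_mul, Complex.exp_ofReal_mul_I_re]
  rw [key]
  exact mul_neg_of_pos_of_neg (norm_pos_iff.mpr hwne) hn

lemma rot_re_neg {c : ℂ} (hc : ‖c‖ = 1) (hc1 : c ≠ 1) {w : ℂ}
    (hw : 0 < w.re) : ∃ n : ℕ, (c ^ n * w).re < 0 := by
  rcases lt_trichotomy c.arg 0 with h | h | h
  · have harg' : 0 < (starRingEnd ℂ c).arg := by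
      rw [Complex.arg_conj]
      have : c.arg ≠ π := by linarith [Real.pi_pos]
      rw [if_neg this]; linarith
    have habs : ‖(starRingEnd ℂ c)‖ = 1 := by rwa [Complex.norm_conj]
    have hwre : 0 < (starRingEnd ℂ w).re := by rwa [Complex.conj_re]
    obtain ⟨n, hn⟩ := core_re_neg habs harg' hwre
    refine ⟨n, ?_⟩
    rwa [← map_pow, ← map_mul, Complex.conj_re] at hn
  · exfalso
    apply hc1
    have := Complex.norm_mul_exp_arg_mul_I c
    rw [h, hc] at this
    simpa using this.symm
  · exact core_re_neg hc h hw


section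
variable {X : Type*} [NormedAddCommGroup X] [NormedSpace ℂ X] {P : Set X}

lemma cone_zero_mem (h5 : P ∩ (-P) = {0}) : (0:X) ∈ P := by
  have : (0:X) ∈ P ∩ (-P) := by rw [h5]; rfl
  exact this.1

lemma cone_eq_zero (h5 : P ∩ (-P) = {0}) {a : X} (ha : a ∈ P) (hb : -a ∈ P) : a = 0 := by
  have : a ∈ P ∩ (-P) := ⟨ha, by simpa [Set.mem_neg] using hb⟩
  rw [h5] at this
  exact this

lemma cone_add (hconv : Convex ℝ P) (hsmul : ∀ s:ℝ, 0 ≤ s → ∀ x ∈ P, s•x ∈ P)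
    {a b : X} (ha : a ∈ P) (hb : b ∈ P) : a + b ∈ P := by
  have h := hconv ha hb (by norm_num : (0:ℝ) ≤ 1/2) (by norm_num : (0:ℝ) ≤ 1/2) (by norm_num)
  have h2 := hsmul 2 (by norm_num) _ h
  have : (2:ℝ) • ((1/2:ℝ) • a + (1/2:ℝ) • b) = a + b := by
    rw [smul_add, smul_smul, smul_smul]; norm_num
  rwa [this] at h2

lemma zero_not_mem_interior [Nontrivial X] (h5 : P ∩ (-P) = {0}) : (0:X) ∉ interior P := by
  intro h
  rw [mem_interior_iff_mem_nhds, Metric.mem_nhds_iff] at h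
  obtain ⟨ε, hε, hball⟩ := h
  obtain ⟨u, hu⟩ := exists_ne (0:X)
  set u' : X := (ε/(2*‖u‖)) • u with hu'
  have hnu : ‖u‖ ≠ 0 := norm_ne_zero_iff.mpr hu
  have hnorm : ‖u'‖ < ε := by
    rw [hu', norm_smul]
    simp only [Real.norm_eq_abs]
    rw [abs_of_pos (by positivity : (0:ℝ) < ε/(2*‖u‖))]
    rw [div_mul_eq_mul_div, mul_comm]
    rw [div_lt_iff₀ (by positivity)]
    nlinarith [norm_pos_iff.mpr hu, hε]
  have h1 : u' ∈ P := hball (by simpa [Metric.mem_ball] using hnorm)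
  have h2 : -u' ∈ P := hball (by simpa [Metric.mem_ball] using hnorm)
  have := cone_eq_zero h5 h1 h2
  rw [hu'] at this
  have : u = 0 := by
    have hne : (ε/(2*‖u‖)) ≠ 0 := by positivity
    exact (smul_eq_zero.mp this).resolve_left hne
  exact hu this

lemma cone_normality [FiniteDimensional ℂ X] (hclosed : IsClosed P)
    (hsmul : ∀ s:ℝ, 0 ≤ s → ∀ x ∈ P, s•x ∈ P) (h5 : P ∩ (-P) = {0}) :
    ∃ C : ℝ, 0 < C ∧ ∀ u w : X, u + w ∈ P → u - w ∈ P → ‖w‖ ≤ C * ‖u‖ := by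
  haveI : ProperSpace X := FiniteDimensional.proper_rclike ℂ X
  by_contra hcon
  push_neg at hcon
  have H : ∀ n : ℕ, ∃ u w : X, u + w ∈ P ∧ u - w ∈ P ∧ (n+1:ℝ) * ‖u‖ < ‖w‖ := by
    intro n
    obtain ⟨u, w, h1, h2, h3⟩ := hcon (n+1) (by positivity)
    exact ⟨u, w, h1, h2, h3⟩
  choose u w hu hw hlt using H
  have hwne : ∀ n, w n ≠ 0 := by
    intro n hn
    have := hlt n
    rw [hn] at this
    simp at this
    nlinarith [norm_nonneg (u n), this]
  set u' : ℕ → X := fun n => ‖w n‖⁻¹ • u n with hu'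
  set w' : ℕ → X := fun n => ‖w n‖⁻¹ • w n with hw'
  have hinv : ∀ n, (0:ℝ) ≤ ‖w n‖⁻¹ := fun n => by positivity
  have hmem1 : ∀ n, u' n + w' n ∈ P := by
    intro n
    have := hsmul _ (hinv n) _ (hu n)
    rwa [smul_add] at this
  have hmem2 : ∀ n, u' n - w' n ∈ P := by
    intro n
    have := hsmul _ (hinv n) _ (hw n)
    rwa [smul_sub] at this
  have hwnorm : ∀ n, ‖w' n‖ = 1 := by
    intro n
    rw [hw', norm_smul, Real.norm_eq_abs, abs_of_nonneg (hinv n),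
      inv_mul_cancel₀ (norm_ne_zero_iff.mpr (hwne n))]
  have hunorm : ∀ n, ‖u' n‖ < 1/(n+1) := by
    intro n
    rw [hu', norm_smul, Real.norm_eq_abs, abs_of_nonneg (hinv n)]
    rw [inv_mul_lt_iff₀ (norm_pos_iff.mpr (hwne n)), mul_one_div, lt_div_iff₀ (by positivity : (0:ℝ) < (n:ℝ)+1)]
    calc ‖u n‖ * ((n:ℝ)+1) = ((n:ℝ)+1) * ‖u n‖ := mul_comm _ _
      _ < ‖w n‖ := hlt n
  obtain ⟨w₀, hw₀mem, φ, hφ, hφtend⟩ :=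
    (isCompact_sphere (0:X) 1).tendsto_subseq (fun n => mem_sphere_zero_iff_norm.mpr (hwnorm n))
  have hutend : Filter.Tendsto (fun n => u' (φ n)) Filter.atTop (nhds 0) := by
    apply squeeze_zero_norm (fun n => (hunorm (φ n)).le)
    have : Filter.Tendsto (fun n : ℕ => 1/((n:ℝ)+1)) Filter.atTop (nhds 0) :=
      tendsto_one_div_add_atTop_nhds_zero_nat
    apply squeeze_zero (fun n => by positivity) (fun n => ?_) this
    apply div_le_div_of_nonneg_left (by norm_num) (by positivity)
    have : (n:ℝ) ≤ (φ n : ℝ) := by exact_mod_cast Nat.cast_le.mpr hφ.le_apply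
    push_cast
    linarith
  have hlim1 : w₀ ∈ P := by
    have : Filter.Tendsto (fun n => u' (φ n) + w' (φ n)) Filter.atTop (nhds (0 + w₀)) :=
      hutend.add hφtend
    rw [zero_add] at this
    exact hclosed.mem_of_tendsto this (Filter.Eventually.of_forall (fun n => hmem1 (φ n)))
  have hlim2 : -w₀ ∈ P := by
    have : Filter.Tendsto (fun n => u' (φ n) - w' (φ n)) Filter.atTop (nhds (0 - w₀)) :=
      hutend.sub hφtend
    rw [zero_sub] at this
    exact hclosed.mem_of_tendsto this (Filter.Eventually.of_forall (fun n => hmem2 (φ n)))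
  have := cone_eq_zero h5 hlim1 hlim2
  rw [this] at hw₀mem
  simp at hw₀mem
end


section
variable {X : Type*} [NormedAddCommGroup X] [NormedSpace ℂ X] [FiniteDimensional ℂ X] {P : Set X}

lemma key_limit (hclosed : IsClosed P)
    (hsmul : ∀ s:ℝ, 0 ≤ s → ∀ x ∈ P, s • x ∈ P)
    (A : X →L[ℂ] X) {μ : ℂ} (hμ : μ ≠ 0) {x : X}
    (hAP : ∀ n : ℕ, (A^n) x ∈ P) (m : ℕ)
    (hNx : ((A - μ • (1:X →L[ℂ] X))^(m+1)) x = 0) :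
    ∃ c : ℂ, ‖c‖ = 1 ∧ c • (((A - μ • (1:X →L[ℂ] X))^m) x) ∈ P := by
  set N : X →L[ℂ] X := A - μ • 1 with hN
  set ρ : ℝ := ‖μ‖ with hρdef
  have hρ : 0 < ρ := norm_pos_iff.mpr hμ
  set y : X := (N^m) x with hy
  -- term evaluation
  have hterm : ∀ n j : ℕ, (N^j * (μ • (1:X →L[ℂ] X))^(n-j) * ((n.choose j : ℕ) : X →L[ℂ] X)) x
      = ((n.choose j : ℂ) * μ^(n-j)) • ((N^j) x) := by
    intro n j
    rw [ContinuousLinearMap.mul_apply, ContinuousLinearMap.mul_apply]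
    have h1 : ((n.choose j : ℕ) : X →L[ℂ] X) x = (n.choose j : ℕ) • x := by simp
    rw [h1, smul_pow, one_pow, ContinuousLinearMap.smul_apply, ContinuousLinearMap.one_apply,
      map_smul, ← Nat.cast_smul_eq_nsmul ℂ, map_smul, smul_smul, mul_comm]
  -- vanishing of high powers
  have hvan : ∀ j : ℕ, m + 1 ≤ j → (N^j) x = 0 := by
    intro j hj
    have : N^j = N^(j - (m+1)) * N^(m+1) := by
      rw [← pow_add]
      congr 1
      omega
    rw [this, ContinuousLinearMap.mul_apply, hNx, map_zero]
  -- binomial expansion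
  have expand : ∀ n : ℕ, m ≤ n →
      (A^n) x = ∑ j ∈ Finset.range (m+1), ((n.choose j : ℂ) * μ^(n-j)) • ((N^j) x) := by
    intro n hn
    have h0 : N + μ • (1:X →L[ℂ] X) = A := by rw [hN]; abel
    have hcomm : Commute N (μ • (1:X →L[ℂ] X)) := (Commute.one_right N).smul_right μ
    have h2 : (A^n) x = ∑ j ∈ Finset.range (n+1), ((n.choose j : ℂ) * μ^(n-j)) • ((N^j) x) := by
      conv_lhs => rw [← h0, hcomm.add_pow]
      rw [ContinuousLinearMap.sum_apply]
      exact Finset.sum_congr rfl (fun j _ => hterm n j)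
    rw [h2]
    symm
    apply Finset.sum_subset
    · exact Finset.range_subset_range.mpr (by omega)
    · intro j hj1 hj2
      rw [Finset.mem_range] at hj1 hj2
      rw [hvan j (by omega), smul_zero]
  -- sequences indexed by l, with n = m + l
  set t : ℕ → ℝ := fun l => (((m+l).choose m : ℝ) * ρ^l)⁻¹ with ht
  set c : ℕ → ℂ := fun l => μ^l * ((ρ:ℂ)^l)⁻¹ with hc
  set g : ℕ → X := fun l => t l • ((A^(m+l)) x) with hg
  have hchoosepos : ∀ l : ℕ, (0:ℝ) < ((m+l).choose m : ℝ) := by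
    intro l
    exact_mod_cast Nat.choose_pos (by omega)
  have htpos : ∀ l, 0 < t l := by
    intro l
    rw [ht]
    have := hchoosepos l
    positivity
  have hgP : ∀ l, g l ∈ P := fun l => hsmul _ (htpos l).le _ (hAP (m+l))
  have hcnorm : ∀ l, ‖c l‖ = 1 := by
    intro l
    rw [hc]
    simp only [norm_mul, norm_pow, norm_inv, Complex.norm_real, Real.norm_eq_abs,
      abs_of_pos hρ]
    rw [← hρdef]
    exact mul_inv_cancel₀ (pow_ne_zero _ hρ.ne')
  -- decomposition
  have hdecomp : ∀ l, g l - c l • y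
      = ∑ j ∈ Finset.range m, (((t l : ℝ) : ℂ) * (((m+l).choose j : ℂ) * μ^(m+l-j))) • ((N^j) x) := by
    intro l
    have h3 : g l = ∑ j ∈ Finset.range (m+1),
        (((t l : ℝ) : ℂ) * (((m+l).choose j : ℂ) * μ^(m+l-j))) • ((N^j) x) := by
      rw [hg]
      simp only
      rw [expand (m+l) (by omega), Finset.smul_sum]
      refine Finset.sum_congr rfl (fun j _ => ?_)
      rw [← Complex.coe_smul, smul_smul]
    rw [h3, Finset.sum_range_succ]
    have hlast : (((t l : ℝ) : ℂ) * (((m+l).choose m : ℂ) * μ^(m+l-m))) = c l := by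
      have he : m + l - m = l := by omega
      rw [he, ht, hc]
      push_cast
      rw [mul_inv]
      have h4 : ((m+l).choose m : ℂ) ≠ 0 := by
        exact_mod_cast (hchoosepos l).ne'
      have h5 : ((ρ:ℂ))^l ≠ 0 := pow_ne_zero _ (by exact_mod_cast hρ.ne')
      field_simp
    rw [hlast, ← hy]
    abel
  -- the bound
  set K : ℝ := ((m+1:ℕ):ℝ)^(m-1) * (m.factorial : ℝ) with hK
  have hKpos : 0 < K := by rw [hK]; positivity
  set B : ℝ := ∑ j ∈ Finset.range m, ρ^(m-j) * ‖(N^j) x‖ with hB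
  have hBnonneg : 0 ≤ B := by
    rw [hB]
    apply Finset.sum_nonneg
    intro j _
    positivity
  have hratio : ∀ l : ℕ, ∀ j < m, ((m+l).choose j : ℝ) * (l+1) ≤ K * ((m+l).choose m : ℝ) := by
    intro l j hj
    have hm1 : 1 ≤ m := by omega
    have h6 : ((m+l).choose j : ℝ) ≤ ((m+l : ℕ):ℝ)^(m-1) := by
      calc ((m+l).choose j : ℝ) ≤ ((m+l:ℕ):ℝ)^j / (j.factorial : ℝ) := Nat.choose_le_pow_div j (m+l)
        _ ≤ ((m+l:ℕ):ℝ)^j := by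
            apply div_le_self (by positivity)
            exact_mod_cast Nat.one_le_iff_ne_zero.mpr (Nat.factorial_ne_zero j)
        _ ≤ ((m+l:ℕ):ℝ)^(m-1) := by
            apply pow_le_pow_right₀
            · exact_mod_cast Nat.one_le_iff_ne_zero.mpr (by omega)
            · omega
    have h7 : ((m+l:ℕ):ℝ) ≤ ((m+1:ℕ):ℝ) * ((l+1:ℕ):ℝ) := by
      have : (m+l : ℕ) ≤ (m+1) * (l+1) := by nlinarith
      exact_mod_cast this
    have h8 : (((l+1:ℕ):ℝ))^m / (m.factorial : ℝ) ≤ ((m+l).choose m : ℝ) := by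
      have := Nat.pow_le_choose (α := ℝ) m (m+l)
      have he : m + l + 1 - m = l + 1 := by omega
      rwa [he] at this
    have h9 : ((m+l:ℕ):ℝ)^(m-1) ≤ ((m+1:ℕ):ℝ)^(m-1) * ((l+1:ℕ):ℝ)^(m-1) := by
      rw [← mul_pow]
      apply pow_le_pow_left₀ (by positivity) h7
    have h10 : ((l+1:ℕ):ℝ)^(m-1) * ((l+1:ℕ):ℝ) = ((l+1:ℕ):ℝ)^m := by
      rw [← pow_succ]
      congr 1
      omega
    have hfac : (0:ℝ) < (m.factorial : ℝ) := by exact_mod_cast Nat.factorial_pos m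
    calc ((m+l).choose j : ℝ) * (l+1)
        ≤ ((m+1:ℕ):ℝ)^(m-1) * ((l+1:ℕ):ℝ)^(m-1) * (l+1) := by
          apply mul_le_mul_of_nonneg_right (h6.trans h9) (by positivity)
      _ = ((m+1:ℕ):ℝ)^(m-1) * ((l+1:ℕ):ℝ)^m := by
          push_cast at h10 ⊢
          rw [mul_assoc, ← h10]
      _ = ((m+1:ℕ):ℝ)^(m-1) * (m.factorial : ℝ) * ((((l+1:ℕ):ℝ))^m / (m.factorial : ℝ)) := by
          field_simp
      _ ≤ ((m+1:ℕ):ℝ)^(m-1) * (m.factorial : ℝ) * ((m+l).choose m : ℝ) := by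
          apply mul_le_mul_of_nonneg_left h8 (by positivity)
      _ = K * ((m+l).choose m : ℝ) := by rw [hK]
  have hebound : ∀ l : ℕ, ‖g l - c l • y‖ ≤ (K * B) * (1/(l+1)) := by
    intro l
    rw [hdecomp l]
    calc ‖∑ j ∈ Finset.range m, (((t l : ℝ) : ℂ) * (((m+l).choose j : ℂ) * μ^(m+l-j))) • ((N^j) x)‖
        ≤ ∑ j ∈ Finset.range m, ‖(((t l : ℝ) : ℂ) * (((m+l).choose j : ℂ) * μ^(m+l-j))) • ((N^j) x)‖ :=
          norm_sum_le _ _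
      _ ≤ ∑ j ∈ Finset.range m, (K * (1/(l+1))) * (ρ^(m-j) * ‖(N^j) x‖) := by
          apply Finset.sum_le_sum
          intro j hj
          rw [Finset.mem_range] at hj
          rw [norm_smul, norm_mul, norm_mul, Complex.norm_real, Real.norm_eq_abs,
            abs_of_pos (htpos l), Complex.norm_natCast, norm_pow]
          rw [← hρdef]
          have hsplit : ρ^(m+l-j) = ρ^l * ρ^(m-j) := by
            rw [← pow_add]
            congr 1
            omega
          rw [hsplit, ht]
          simp only
          rw [mul_inv]
          have hc1 : (0:ℝ) < ((m+l).choose m : ℝ) := hchoosepos l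
          have hc2 : (0:ℝ) < ρ^l := by positivity
          have hl1 : (0:ℝ) < (l:ℝ)+1 := by positivity
          have hkey : (((m+l).choose m : ℝ))⁻¹ * ((m+l).choose j : ℝ) ≤ K * (1/(l+1)) := by
            have h11 : ((m+l).choose j : ℝ) ≤ K * ((m+l).choose m : ℝ) / ((l:ℝ)+1) := by
              rw [le_div_iff₀ hl1]
              exact_mod_cast hratio l j hj
            calc (((m+l).choose m : ℝ))⁻¹ * ((m+l).choose j : ℝ)
                ≤ (((m+l).choose m : ℝ))⁻¹ * (K * ((m+l).choose m : ℝ) / ((l:ℝ)+1)) :=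
                  mul_le_mul_of_nonneg_left h11 (by positivity)
              _ = K * (1/(l+1)) := by
                  field_simp
          calc (((m+l).choose m:ℝ))⁻¹ * (ρ^l)⁻¹ * (((m+l).choose j:ℝ) * (ρ^l * ρ^(m-j))) * ‖(N^j) x‖
              = ((((m+l).choose m:ℝ))⁻¹ * ((m+l).choose j:ℝ)) * (ρ^(m-j) * ‖(N^j) x‖) := by
                field_simp
            _ ≤ (K * (1/(l+1))) * (ρ^(m-j) * ‖(N^j) x‖) :=
                mul_le_mul_of_nonneg_right hkey (by positivity)
      _ = (K * B) * (1/(l+1)) := by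
          rw [hB, Finset.mul_sum, Finset.sum_mul]
          refine Finset.sum_congr rfl (fun j _ => ?_)
          ring
  have htend0 : Filter.Tendsto (fun l => g l - c l • y) Filter.atTop (nhds 0) := by
    apply squeeze_zero_norm hebound
    have h := tendsto_one_div_add_atTop_nhds_zero_nat (𝕜 := ℝ)
    have h2 := h.const_mul (K*B)
    simpa using h2
  obtain ⟨c₀, hc₀mem, φ, hφ, hφtend⟩ :=
    (isCompact_sphere (0:ℂ) 1).tendsto_subseq (fun l => mem_sphere_zero_iff_norm.mpr (hcnorm l))
  have hgy : Filter.Tendsto (fun l => g (φ l)) Filter.atTop (nhds (c₀ • y)) := by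
    have h1 : Filter.Tendsto (fun l => g (φ l) - c (φ l) • y) Filter.atTop (nhds 0) :=
      htend0.comp hφ.tendsto_atTop
    have h2 : Filter.Tendsto (fun l => c (φ l) • y) Filter.atTop (nhds (c₀ • y)) :=
      hφtend.smul tendsto_const_nhds
    have h3 := h1.add h2
    rw [zero_add] at h3
    convert h3 using 2 with l
    abel
  have hmem := hclosed.mem_of_tendsto hgy (Filter.Eventually.of_forall fun l => hgP (φ l))
  exact ⟨c₀, mem_sphere_zero_iff_norm.mp hc₀mem, hmem⟩
end

/-- under the hypotheses of the complex Perron–Frobenius theorem, the cone `P`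
contains no generalized eigenvector associated with any eigenvalue `μ ≠ r_σ(A)`. -/
theorem cone_contains_no_generalized_eigenvector_of_other_eigenvalue
    {X : Type*} [NormedAddCommGroup X] [NormedSpace ℂ X] [FiniteDimensional ℂ X]
    (P : Set X) (hP : IsSolidCone P)
    (A : X →L[ℂ] X) (hA : IsRotStronglyPositive P A)
    (μ : ℂ) (hμ : μ ≠ (((spectralRadius ℂ A).toReal : ℂ)))
    (x : X) (hx : x ≠ 0) (k : ℕ) (hk : 1 ≤ k)
    (hgen : ((A - μ • (1 : X →L[ℂ] X)) ^ k) x = 0) :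
    x ∉ P := by
  intro hxP
  classical
  haveI : Nontrivial X := nontrivial_of_ne x 0 hx
  haveI : ProperSpace X := FiniteDimensional.proper_rclike ℂ X
  obtain ⟨⟨hclosed, hconv, hPne, hsmul, hcap⟩, hint⟩ := hP
  obtain ⟨hpos, hstrong⟩ := hA
  have h0P : (0:X) ∈ P := cone_zero_mem hcap
  have h0int : (0:X) ∉ interior P := zero_not_mem_interior hcap
  have hAne : ∀ p ∈ P, p ≠ 0 → A p ≠ 0 := by
    intro p hp hpne hAp0
    obtain ⟨z, hz⟩ := hstrong p hp hpne
    rw [hAp0, smul_zero] at hz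
    exact h0int hz
  have hAPgen : ∀ w, w ∈ P → ∀ n : ℕ, (A^n) w ∈ P := by
    intro w hw n
    induction n with
    | zero => simpa using hw
    | succ n ih =>
        rw [pow_succ', ContinuousLinearMap.mul_apply]
        exact hpos _ ih
  have hAP : ∀ n : ℕ, (A^n) x ∈ P := hAPgen x hxP
  have hApow_ne : ∀ n : ℕ, (A^n) x ≠ 0 := by
    intro n
    induction n with
    | zero => simpa using hx
    | succ n ih =>
        rw [pow_succ', ContinuousLinearMap.mul_apply]
        exact hAne _ (hAP n) ih
  have hμ0 : μ ≠ 0 := by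
    intro h
    rw [h] at hgen
    simp only [zero_smul, sub_zero] at hgen
    exact hApow_ne k hgen
  -- minimal vanishing index
  have hexist : ∃ n, ((A - μ • (1:X →L[ℂ] X))^n) x = 0 := ⟨k, hgen⟩
  set j := Nat.find hexist with hj
  have hjspec : ((A - μ • (1:X →L[ℂ] X))^j) x = 0 := Nat.find_spec hexist
  have hjpos : 1 ≤ j := by
    rcases Nat.eq_zero_or_pos j with h | h
    · exfalso
      rw [h, pow_zero] at hjspec
      simp at hjspec
      exact hx hjspec
    · exact h
  set m := j - 1 with hm
  have hmj : m + 1 = j := by omega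
  have hNm1 : ((A - μ • (1:X →L[ℂ] X))^(m+1)) x = 0 := by rw [hmj]; exact hjspec
  have hyne : ((A - μ • (1:X →L[ℂ] X))^m) x ≠ 0 := Nat.find_min hexist (by omega)
  obtain ⟨c₀, hc₀, hc₀y⟩ := key_limit hclosed hsmul A hμ0 hAP m hNm1
  set y' : X := c₀ • (((A - μ • (1:X →L[ℂ] X))^m) x) with hy'
  have hy'ne : y' ≠ 0 := smul_ne_zero (by intro h; rw [h] at hc₀; simp at hc₀) hyne
  have hy'eig : A y' = μ • y' := by
    have h1 : (A - μ • (1:X →L[ℂ] X)) y' = 0 := by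
      rw [hy', map_smul]
      have : (A - μ • (1:X →L[ℂ] X)) (((A - μ • (1:X →L[ℂ] X))^m) x)
          = ((A - μ • (1:X →L[ℂ] X))^(m+1)) x := by
        rw [pow_succ', ContinuousLinearMap.mul_apply]
      rw [this, hNm1, smul_zero]
    have h2 : A y' - μ • y' = 0 := by
      rw [← h1]
      simp [ContinuousLinearMap.sub_apply, ContinuousLinearMap.smul_apply,
        ContinuousLinearMap.one_apply]
    linear_combination (norm := module) h2
  obtain ⟨z, hz⟩ := hstrong y' hc₀y hy'ne
  set v : X := (z*μ) • y' with hv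
  have hvint : v ∈ interior P := by
    rw [hv, ← smul_smul]
    rw [hy'eig] at hz
    exact hz
  have hvP : v ∈ P := interior_subset hvint
  have hvne : v ≠ 0 := by
    intro h
    rw [h] at hvint
    exact h0int hvint
  have hveig : A v = μ • v := by
    rw [hv, map_smul, hy'eig, smul_comm]
  set ρ : ℝ := ‖μ‖ with hρdef
  have hρ : 0 < ρ := norm_pos_iff.mpr hμ0
  set c : ℂ := μ * ((ρ:ℂ))⁻¹ with hcdef
  have hcnorm : ‖c‖ = 1 := by
    rw [hcdef, norm_mul, norm_inv, Complex.norm_real, Real.norm_eq_abs, abs_of_pos hρ, ← hρdef]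
    exact mul_inv_cancel₀ hρ.ne'
  have hvpow : ∀ n : ℕ, (A^n) v = μ^n • v := by
    intro n
    induction n with
    | zero => simp
    | succ n ih =>
        rw [pow_succ', ContinuousLinearMap.mul_apply, ih, map_smul, hveig, smul_smul, pow_succ']
        ring_nf
  have hcnP : ∀ n : ℕ, (c^n) • v ∈ P := by
    intro n
    have h1 : (A^n) v ∈ P := hAPgen v hvP n
    have h2 := hsmul ((ρ^n)⁻¹) (by positivity) _ h1
    rw [hvpow n] at h2
    have h3 : ((ρ^n)⁻¹ : ℝ) • (μ^n • v) = (c^n) • v := by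
      rw [← Complex.coe_smul, smul_smul, hcdef, mul_pow, inv_pow]
      push_cast
      ring_nf
    rwa [h3] at h2
  -- c = 1 via separation and rotation
  have hc1 : c = 1 := by
    by_contra hcne
    have hnegv : -v ∉ P := by
      intro h
      exact hvne (cone_eq_zero hcap hvP h)
    obtain ⟨f, u, hfP, hfu⟩ := geometric_hahn_banach_closed_point hconv hclosed hnegv
    have hu0 : 0 < u := by
      have := hfP 0 h0P
      simpa using this
    have hfnonpos : ∀ p ∈ P, f p ≤ 0 := by
      intro p hp
      by_contra h
      push_neg at h
      have hs : (0:ℝ) ≤ (u+1)/(f p) := by positivity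
      have hmem := hsmul _ hs _ hp
      have := hfP _ hmem
      rw [map_smul, smul_eq_mul, div_mul_cancel₀ _ h.ne'] at this
      linarith
    have hgv : 0 < -(f v) := by
      have : f (-v) = - f v := map_neg f v
      rw [this] at hfu
      linarith
    set w : ℂ := Complex.mk (-(f v)) (f (Complex.I • v)) with hw
    have hwre : 0 < w.re := hgv
    have habs : ‖c‖ = 1 := by exact hcnorm
    obtain ⟨n, hn⟩ := rot_re_neg habs hcne hwre
    -- compute (c^n * w).re = -(f ((c^n) • v))
    have hdec : (c^n) • v = (c^n).re • v + (c^n).im • (Complex.I • v) := by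
      have hgen' : ∀ (ζ : ℂ) (q : X), ζ • q = ζ.re • q + ζ.im • (Complex.I • q) := by
        intro ζ q
        rw [← Complex.coe_smul, ← Complex.coe_smul, smul_smul, ← add_smul, Complex.re_add_im]
      exact hgen' (c^n) v
    have hre : (c^n * w).re = -(f ((c^n) • v)) := by
      rw [hdec, map_add]
      rw [show f ((c^n).re • v) = (c^n).re * f v from by rw [map_smul, smul_eq_mul]]
      rw [show f ((c^n).im • (Complex.I • v)) = (c^n).im * f (Complex.I • v) from by
        rw [map_smul, smul_eq_mul]]
      rw [Complex.mul_re, hw]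
      simp
      ring
    have := hfnonpos _ (hcnP n)
    rw [hre] at hn
    linarith
  have hμρ : μ = (ρ:ℂ) := by
    have hρne : ((ρ:ℂ)) ≠ 0 := by
      exact_mod_cast hρ.ne'
    exact (mul_inv_eq_one₀ hρne).mp hc1
  -- μ belongs to the spectrum of A
  have hspec : μ ∈ spectrum ℂ A := by
    rw [spectrum.mem_iff]
    intro hUnit
    obtain ⟨U, hU⟩ := hUnit.pow k
    have hux : ((algebraMap ℂ (X →L[ℂ] X) μ - A)^k) x = 0 := by
      have hnegrel : (algebraMap ℂ (X →L[ℂ] X) μ - A) = -(A - μ • (1:X →L[ℂ] X)) := by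
        rw [Algebra.algebraMap_eq_smul_one]
        abel
      rw [hnegrel, neg_pow, ContinuousLinearMap.mul_apply, hgen, map_zero]
    have hx0 : x = 0 := by
      have h1 : ((↑U⁻¹ * ↑U : X →L[ℂ] X)) x = x := by
        rw [Units.inv_mul]
        exact ContinuousLinearMap.one_apply x
      rw [ContinuousLinearMap.mul_apply, hU, hux, map_zero] at h1
      exact h1.symm
    exact hx hx0
  have hle1 : (‖μ‖₊ : ℝ≥0∞) ≤ spectralRadius ℂ A := le_iSup₂ (α := ℝ≥0∞) μ hspec
  -- operator norm bound from the order structure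
  obtain ⟨C, hC, hnrm⟩ := cone_normality hclosed hsmul hcap
  obtain ⟨ε, hε, hball⟩ := Metric.mem_nhds_iff.mp (mem_interior_iff_mem_nhds.mp hvint)
  have hvnorm : 0 < ‖v‖ := norm_pos_iff.mpr hvne
  set D : ℝ := C * ‖v‖ * (2/ε) with hD
  have hDpos : 0 < D := by rw [hD]; positivity
  have hop : ∀ n : ℕ, ‖A^n‖ ≤ D * ρ^n := by
    intro n
    apply ContinuousLinearMap.opNorm_le_bound _ (by positivity)
    intro y0
    rcases eq_or_ne y0 0 with rfl | hy0
    · simp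
    have hy0n : 0 < ‖y0‖ := norm_pos_iff.mpr hy0
    set s : ℝ := ε/(2*‖y0‖) with hs
    have hspos : 0 < s := by rw [hs]; positivity
    have hsy : ‖s • y0‖ = ε/2 := by
      rw [norm_smul, Real.norm_eq_abs, abs_of_pos hspos, hs]
      field_simp
    have hmem1 : v + s • y0 ∈ P := by
      apply hball
      rw [Metric.mem_ball, dist_eq_norm, add_sub_cancel_left, hsy]
      linarith
    have hmem2 : v - s • y0 ∈ P := by
      apply hball
      rw [Metric.mem_ball, dist_eq_norm, sub_sub_cancel_left, norm_neg, hsy]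
      linarith
    have happ1 : (A^n) (v + s • y0) = μ^n • v + s • ((A^n) y0) := by
      rw [map_add, hvpow, ContinuousLinearMap.map_smul_of_tower]
    have happ2 : (A^n) (v - s • y0) = μ^n • v - s • ((A^n) y0) := by
      rw [map_sub, hvpow, ContinuousLinearMap.map_smul_of_tower]
    have hPa := hAPgen _ hmem1 n
    rw [happ1] at hPa
    have hPb := hAPgen _ hmem2 n
    rw [happ2] at hPb
    have hbound := hnrm _ _ hPa hPb
    rw [norm_smul, norm_smul, norm_pow, Real.norm_eq_abs, abs_of_pos hspos] at hbound
    have h5 : ‖(A^n) y0‖ ≤ C * (‖μ‖^n * ‖v‖) / s := by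
      rw [le_div_iff₀ hspos]
      calc ‖(A^n) y0‖ * s = s * ‖(A^n) y0‖ := mul_comm _ _
        _ ≤ C * (‖μ‖^n * ‖v‖) := hbound
    calc ‖(A^n) y0‖ ≤ C * (‖μ‖^n * ‖v‖) / s := h5
      _ = D * ρ^n * ‖y0‖ := by
          rw [hD, hs, hρdef]
          field_simp
  -- Gelfand's formula gives the upper bound
  haveI : CompleteSpace X := FiniteDimensional.complete ℂ X
  have hfin : spectralRadius ℂ A ≠ ⊤ :=
    ne_top_of_le_ne_top ENNReal.coe_ne_top (spectrum.spectralRadius_le_nnnorm (𝕜 := ℂ) A)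
  set R : ℝ := (spectralRadius ℂ A).toReal with hR
  have hgel := spectrum.pow_nnnorm_pow_one_div_tendsto_nhds_spectralRadius A
  have hgelR : Filter.Tendsto (fun n : ℕ => ‖A^n‖ ^ ((1:ℝ)/n)) Filter.atTop (nhds R) := by
    have hcont := (ENNReal.tendsto_toReal hfin).comp hgel
    convert hcont using 2 with n
    rw [Function.comp_apply, ← ENNReal.toReal_rpow]
    simp
  have hcmp : ∀ᶠ n : ℕ in Filter.atTop,
      ‖A^n‖^((1:ℝ)/n) ≤ (Real.exp (Real.log D * (1/n))) * ρ := by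
    filter_upwards [Filter.eventually_ge_atTop 1] with n hn
    have h1 : ‖A^n‖^((1:ℝ)/n) ≤ (D * ρ^n)^((1:ℝ)/n) :=
      Real.rpow_le_rpow (norm_nonneg _) (hop n) (by positivity)
    have h2 : (D * ρ^n)^((1:ℝ)/n) = D^((1:ℝ)/n) * ρ := by
      rw [Real.mul_rpow hDpos.le (by positivity)]
      congr 1
      rw [← Real.rpow_natCast ρ n, ← Real.rpow_mul hρ.le]
      rw [mul_one_div, div_self (by exact_mod_cast Nat.one_le_iff_ne_zero.mp hn :
        ((n:ℝ)) ≠ 0), Real.rpow_one]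
    have h3 : D^((1:ℝ)/n) = Real.exp (Real.log D * (1/n)) := by
      rw [Real.rpow_def_of_pos hDpos]
    rw [h2, h3] at h1
    exact h1
  have hlim2 : Filter.Tendsto (fun n : ℕ => (Real.exp (Real.log D * (1/n))) * ρ)
      Filter.atTop (nhds ρ) := by
    have ht1 : Filter.Tendsto (fun n : ℕ => Real.log D * (1/n)) Filter.atTop (nhds 0) := by
      simpa using (tendsto_one_div_atTop_nhds_zero_nat).const_mul (Real.log D)
    have ht2 : Filter.Tendsto (fun n : ℕ => Real.exp (Real.log D * (1/n))) Filter.atTop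
        (nhds 1) := by
      have := (Real.continuous_exp.tendsto 0).comp ht1
      simpa [Function.comp_def] using this
    have := ht2.mul (tendsto_const_nhds (x := ρ) (f := Filter.atTop))
    simpa using this
  have hRle : R ≤ ρ := le_of_tendsto_of_tendsto hgelR hlim2 hcmp
  have hρle : ρ ≤ R := by
    have := ENNReal.toReal_mono hfin hle1
    simpa [hρdef] using this
  have hfinal : μ = (R:ℂ) := by
    have hρR : ρ = R := le_antisymm hρle hRle
    rw [hμρ, hρR]
  exact hμ hfinal
end

section
/- Let X be a complex vector space with an internal direct sum decomposition X = X_1 ⊕ ⋯ ⊕ X_n into subspaces, with associated projections Π_i : X → X_i, and let P be a cone in the complex Banach space X. Then there exists a nonempty subset S ⊆ {1, …, n} such that, writing X_0 = ⊕_{i ∈ S} X_i and P_0 = P ∩ X_0, one has P_0 ≠ {θ} (so P_0 is a cone in X_0), and P_0 is projectively proper with respect to the decomposition X_0 = ⊕_{i ∈ S} X_i: for every i ∈ S, (Π_i P_0) ∩ (−Π_i P_0) = {θ}. -/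
/-- given an internal direct sum decomposition `X = X_1 ⊕ ⋯ ⊕ X_n` with
projections `π i`, and a cone `P` in `X`, there is a nonempty set `S` of indices such that
`P₀ = P ∩ (⊕_{i ∈ S} X_i)` is nontrivial (hence a cone in `X₀ = ⊕_{i ∈ S} X_i`) and `P₀`
is projectively proper: `(π i '' P₀) ∩ (−(π i '' P₀)) = {0}` for every `i ∈ S`. -/
theorem exists_projectively_proper_subcone
    {X : Type*} [NormedAddCommGroup X] [NormedSpace ℂ X] [CompleteSpace X]
    (P : Set X) (hP : IsCone P)
    (n : ℕ) (Xs : Fin n → Submodule ℂ X) (π : Fin n → (X →ₗ[ℂ] X))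
    (hsum : ∀ x : X, ∑ i, π i x = x)
    (hmem : ∀ i, ∀ x : X, π i x ∈ Xs i)
    (hdiag : ∀ i j, i ≠ j → ∀ x ∈ Xs j, π i x = 0) :
    ∃ S : Finset (Fin n), S.Nonempty ∧
      P ∩ (↑(⨆ i ∈ S, Xs i) : Set X) ≠ {0} ∧
      ∀ i ∈ S,
        (π i '' (P ∩ (↑(⨆ j ∈ S, Xs j) : Set X))) ∩
          (-(π i '' (P ∩ (↑(⨆ j ∈ S, Xs j) : Set X)))) = {0} := by
  classical
  obtain ⟨hclosed, hconv, hne, hscale, hproper⟩ := hP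
  -- 0 ∈ P
  have h0P : (0 : X) ∈ P := by
    have : (0 : X) ∈ P ∩ (-P) := by rw [hproper]; rfl
    exact this.1
  -- P is closed under addition
  have hadd : ∀ x ∈ P, ∀ y ∈ P, x + y ∈ P := by
    intro x hx y hy
    have hmid : (1/2 : ℝ) • x + (1/2 : ℝ) • y ∈ P :=
      hconv hx hy (by norm_num) (by norm_num) (by norm_num)
    have h2 : (2 : ℝ) • ((1/2 : ℝ) • x + (1/2 : ℝ) • y) ∈ P :=
      hscale 2 (by norm_num) _ hmid
    have : (2 : ℝ) • ((1/2 : ℝ) • x + (1/2 : ℝ) • y) = x + y := by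
      rw [smul_add, smul_smul, smul_smul]; norm_num
    rwa [this] at h2
  -- elements of ⨆ i ∈ S, Xs i are killed by π j for j ∉ S
  have hker : ∀ (S : Finset (Fin n)) (j : Fin n), j ∉ S →
      ∀ z ∈ (⨆ i ∈ S, Xs i : Submodule ℂ X), π j z = 0 := by
    intro S j hj z hz
    have hle : (⨆ i ∈ S, Xs i : Submodule ℂ X) ≤ LinearMap.ker (π j) := by
      refine iSup₂_le fun i hi => ?_
      intro w hw
      have hij : j ≠ i := by rintro rfl; exact hj hi
      exact LinearMap.mem_ker.mpr (hdiag j i hij w hw)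
    exact hle hz
  -- criterion for membership in ⨆ i ∈ S, Xs i
  have hmemSup : ∀ (S : Finset (Fin n)) (x : X), (∀ j, j ∉ S → π j x = 0) →
      x ∈ (⨆ i ∈ S, Xs i : Submodule ℂ X) := by
    intro S x hx
    have hx' : x = ∑ j ∈ S, π j x := by
      conv_lhs => rw [← hsum x]
      exact (Finset.sum_subset (Finset.subset_univ S)
        (fun j _ hj => hx j hj)).symm
    rw [hx']
    exact Submodule.sum_mem _ fun j hj =>
      Submodule.mem_iSup_of_mem j (Submodule.mem_iSup_of_mem hj (hmem j x))
  -- the predicate Q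
  set Q : Finset (Fin n) → Prop :=
    fun S => S.Nonempty ∧ P ∩ (↑(⨆ i ∈ S, Xs i) : Set X) ≠ {0} with hQ
  -- n ≠ 0, and Q univ holds
  have hn : n ≠ 0 := by
    rintro rfl
    apply hne
    apply Set.eq_singleton_iff_unique_mem.mpr
    refine ⟨h0P, fun x hx => ?_⟩
    have := hsum x
    simpa using this.symm
  have hQuniv : Q Finset.univ := by
    constructor
    · exact Finset.univ_nonempty_iff.mpr (Fin.pos_iff_nonempty.mp (Nat.pos_of_ne_zero hn))
    · have heq : P ∩ (↑(⨆ i ∈ Finset.univ, Xs i) : Set X) = P := by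
        apply Set.inter_eq_self_of_subset_left
        intro x _
        exact hmemSup Finset.univ x (fun j hj => absurd (Finset.mem_univ j) hj)
      rw [heq]; exact hne
  -- pick S with minimal cardinality satisfying Q
  have hex : ∃ m : ℕ, ∃ S : Finset (Fin n), S.card = m ∧ Q S :=
    ⟨Finset.univ.card, Finset.univ, rfl, hQuniv⟩
  obtain ⟨S, hScard, hQS⟩ := Nat.find_spec hex
  have hmin : ∀ S' : Finset (Fin n), Q S' → Nat.find hex ≤ S'.card := by
    intro S' hQS'
    exact Nat.find_min' hex ⟨S', rfl, hQS'⟩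
  refine ⟨S, hQS.1, hQS.2, ?_⟩
  intro i hi
  apply Set.eq_singleton_iff_unique_mem.mpr
  constructor
  · -- 0 is in the intersection
    have h0 : (0 : X) ∈ π i '' (P ∩ (↑(⨆ j ∈ S, Xs j) : Set X)) :=
      ⟨0, ⟨h0P, Submodule.zero_mem _⟩, map_zero _⟩
    exact ⟨h0, by simpa [Set.mem_neg] using h0⟩
  · -- uniqueness
    rintro u ⟨⟨x, ⟨hxP, hxS⟩, hxu⟩, hu2⟩
    rw [Set.mem_neg] at hu2
    obtain ⟨y, ⟨hyP, hyS⟩, hyu⟩ := hu2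
    -- z = x + y
    set z : X := x + y with hz
    have hzP : z ∈ P := hadd x hxP y hyP
    have hzS : z ∈ (⨆ j ∈ S, Xs j : Submodule ℂ X) := Submodule.add_mem _ hxS hyS
    have hπiz : π i z = 0 := by
      have : π i z = π i x + π i y := map_add _ _ _
      rw [this, hxu, hyu]; exact add_neg_cancel u
    by_cases hz0 : z = 0
    · -- then x = -y, so x ∈ P ∩ (-P) = {0}
      have hxy : x = -y := eq_neg_of_add_eq_zero_left (hz ▸ hz0)
      have hx0 : x ∈ P ∩ (-P) := ⟨hxP, by rw [Set.mem_neg, hxy, neg_neg]; exact hyP⟩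
      rw [hproper] at hx0
      rw [← hxu, hx0, map_zero]
    · -- minimality contradiction
      have hkill : ∀ j, j ∉ S.erase i → π j z = 0 := by
        intro j hj
        by_cases hjS : j ∈ S
        · have : j = i := by
            by_contra hne'
            exact hj (Finset.mem_erase.mpr ⟨hne', hjS⟩)
          rw [this]; exact hπiz
        · exact hker S j hjS z hzS
      have hzS' : z ∈ (⨆ j ∈ S.erase i, Xs j : Submodule ℂ X) := hmemSup _ z hkill
      have hS'ne : (S.erase i).Nonempty := by
        rcases Finset.eq_empty_or_nonempty (S.erase i) with h | h
        · exfalso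
          apply hz0
          have : z = ∑ j ∈ S.erase i, π j z := by
            conv_lhs => rw [← hsum z]
            exact (Finset.sum_subset (Finset.subset_univ _)
              (fun j _ hj => hkill j hj)).symm
          rw [this, h, Finset.sum_empty]
        · exact h
      have hQS' : Q (S.erase i) := by
        refine ⟨hS'ne, fun heq => hz0 ?_⟩
        have : z ∈ P ∩ (↑(⨆ j ∈ S.erase i, Xs j) : Set X) := ⟨hzP, hzS'⟩
        rw [heq] at this
        exact this
      have hlt : (S.erase i).card < S.card := Finset.card_erase_lt_of_mem hi
      have := hmin _ hQS'
      omega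
end

section
/- Let X be a complex Banach space, let P be a cone in X, and let X_0 be a finite-dimensional subspace of X with P ∩ X_0 = {θ}. If (x_k) is a sequence in P such that d(x_k, X_0) → 0 as k → ∞, where d(x, X_0) = inf_{y ∈ X_0} ‖x − y‖, then x_k → θ as k → ∞. -/
/-- if `X₀` is a finite-dimensional subspace with `P ∩ X₀ = {0}` and `(x k)`
is a sequence in the cone `P` with `d(x k, X₀) → 0`, then `x k → 0`. -/
theorem tendsto_zero_of_infDist_tendsto_zero
    {X : Type*} [NormedAddCommGroup X] [NormedSpace ℂ X] [CompleteSpace X]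
    (P : Set X) (hP : IsCone P)
    (X₀ : Submodule ℂ X) (hfin : FiniteDimensional ℂ X₀)
    (hPX₀ : P ∩ (X₀ : Set X) = {0})
    (x : ℕ → X) (hx : ∀ k, x k ∈ P)
    (hdist : Filter.Tendsto (fun k => Metric.infDist (x k) (X₀ : Set X))
      Filter.atTop (nhds 0)) :
    Filter.Tendsto x Filter.atTop (nhds 0) := by
  by_contra h
  rw [Metric.tendsto_atTop] at h
  push_neg at h
  obtain ⟨ε, hε, hfreq⟩ := h
  obtain ⟨φ, hφ, hφε⟩ := Filter.extraction_of_frequently_atTop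
    (Filter.frequently_atTop.2 hfreq)
  have hεnorm : ∀ n, ε ≤ ‖x (φ n)‖ := by simpa [dist_zero_right] using hφε
  have hxpos : ∀ n, 0 < ‖x (φ n)‖ := fun n => lt_of_lt_of_le hε (hεnorm n)
  set c : ℕ → ℝ := fun n => ‖x (φ n)‖⁻¹ with hc
  have hcpos : ∀ n, 0 < c n := fun n => inv_pos.2 (hxpos n)
  set y : ℕ → X := fun n => c n • x (φ n) with hy
  have hyP : ∀ n, y n ∈ P := fun n => hP.2.2.2.1 (c n) (hcpos n).le _ (hx (φ n))
  have hynorm : ∀ n, ‖y n‖ = 1 := by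
    intro n
    rw [hy]
    simp only [norm_smul, Real.norm_eq_abs, abs_of_pos (hcpos n)]
    exact inv_mul_cancel₀ (hxpos n).ne'
  set d : ℕ → ℝ := fun n => Metric.infDist (x (φ n)) (X₀ : Set X) with hdd
  have hd0 : ∀ n, 0 ≤ d n := fun n => Metric.infDist_nonneg
  have hd : Filter.Tendsto d Filter.atTop (nhds 0) := hdist.comp hφ.tendsto_atTop
  have hne : (X₀ : Set X).Nonempty := ⟨0, X₀.zero_mem⟩
  have hw : ∀ n : ℕ, ∃ w ∈ (X₀ : Set X), dist (x (φ n)) w < d n + 1 / (n + 1) := by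
    intro n
    refine (Metric.infDist_lt_iff hne).1 ?_
    have : (0:ℝ) < 1 / (n + 1) := by positivity
    linarith
  choose w hwmem hwd using hw
  set z : ℕ → X := fun n => c n • w n with hz
  have hzmem : ∀ n, z n ∈ X₀ := fun n => X₀.smul_of_tower_mem (c n) (hwmem n)
  set t : ℕ → ℝ := fun n => ‖y n - z n‖ with htdef
  have htval : ∀ n, t n = c n * dist (x (φ n)) (w n) := by
    intro n
    rw [htdef]
    simp only [hy, hz, ← smul_sub, norm_smul, Real.norm_eq_abs, abs_of_pos (hcpos n),
      dist_eq_norm]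
  have hcle : ∀ n, c n ≤ ε⁻¹ := fun n => inv_anti₀ hε (hεnorm n)
  have htle : ∀ n, t n ≤ ε⁻¹ * (d n + 1 / (n + 1)) := by
    intro n
    rw [htval n]
    have h1 : dist (x (φ n)) (w n) ≤ d n + 1 / (n + 1) := (hwd n).le
    have h2 : (0:ℝ) ≤ dist (x (φ n)) (w n) := dist_nonneg
    exact mul_le_mul (hcle n) h1 h2 (by positivity)
  have hrhs : Filter.Tendsto (fun n : ℕ => ε⁻¹ * (d n + 1 / (n + 1)))
      Filter.atTop (nhds 0) := by
    have := (hd.add tendsto_one_div_add_atTop_nhds_zero_nat).const_mul ε⁻¹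
    simpa using this
  have ht : Filter.Tendsto t Filter.atTop (nhds 0) :=
    squeeze_zero (fun n => norm_nonneg _) htle hrhs
  obtain ⟨C, hC⟩ : ∃ C, ∀ n, t n ≤ C := by
    obtain ⟨C, hC⟩ := ht.bddAbove_range
    exact ⟨C, fun n => hC ⟨n, rfl⟩⟩
  have hznorm : ∀ n, ‖z n‖ ≤ 1 + C := by
    intro n
    have : ‖z n‖ ≤ ‖y n‖ + ‖y n - z n‖ := by
      have := norm_add_le (y n - z n) (z n)
      simpa [norm_sub_rev] using (norm_le_norm_add_norm_sub' (z n) (y n))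
    calc ‖z n‖ ≤ ‖y n‖ + ‖y n - z n‖ := this
    _ = 1 + t n := by rw [hynorm n]
    _ ≤ 1 + C := by linarith [hC n]
  set zs : ℕ → X₀ := fun n => ⟨z n, hzmem n⟩ with hzs
  have hzsball : ∀ n, zs n ∈ Metric.closedBall (0 : X₀) (1 + C) := by
    intro n
    rw [Metric.mem_closedBall, dist_zero_right]
    exact hznorm n
  haveI : ProperSpace X₀ := FiniteDimensional.proper ℂ X₀
  obtain ⟨z₀, hz₀ball, ψ, hψ, hψt⟩ :=
    (isCompact_closedBall (0 : X₀) (1 + C)).tendsto_subseq hzsball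
  have hzcoe : Filter.Tendsto (fun n => z (ψ n)) Filter.atTop (nhds (z₀ : X)) :=
    (continuous_subtype_val.tendsto z₀).comp hψt
  have hymz : Filter.Tendsto (fun n => y (ψ n) - z (ψ n)) Filter.atTop (nhds 0) := by
    rw [tendsto_zero_iff_norm_tendsto_zero]
    exact ht.comp hψ.tendsto_atTop
  have hylim : Filter.Tendsto (fun n => y (ψ n)) Filter.atTop (nhds (z₀ : X)) := by
    have := hymz.add hzcoe
    simpa using this
  have hz₀P : (z₀ : X) ∈ P :=
    hP.1.mem_of_tendsto hylim (Filter.Eventually.of_forall fun n => hyP (ψ n))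
  have hz₀zero : (z₀ : X) = 0 := by
    have : (z₀ : X) ∈ P ∩ (X₀ : Set X) := ⟨hz₀P, z₀.2⟩
    rw [hPX₀] at this
    exact this
  have hz₀norm : ‖(z₀ : X)‖ = 1 := by
    have h1 : Filter.Tendsto (fun n => ‖y (ψ n)‖) Filter.atTop (nhds ‖(z₀ : X)‖) :=
      hylim.norm
    have h2 : Filter.Tendsto (fun n => ‖y (ψ n)‖) Filter.atTop (nhds 1) := by
      simp only [hynorm]
      exact tendsto_const_nhds (α := ℕ) (x := (1:ℝ))
    exact tendsto_nhds_unique h1 h2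
  rw [hz₀zero, norm_zero] at hz₀norm
  exact zero_ne_one hz₀norm
end

section
/- Let X be an n-dimensional complex normed space and let A be a linear operator on X. For every x₀ ∈ X with x₀ ≠ θ there exist α ∈ ℝ, an integer ν ≥ 0, an integer k ≥ 1, nonzero complex numbers c_1, …, c_k, real numbers β_1, …, β_k, and linearly independent vectors w_1, …, w_k with A w_i = (α + i β_i) w_i for each i, such that ‖t^{−ν} e^{−α t} exp(tA) x₀ − Σ_{i=1}^k c_i e^{i β_i t} w_i‖ → 0 as t → +∞. -/
open Filter

private lemma aux_pow_exp (a : ℕ) (δ : ℝ) (hδ : δ < 0) :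
    Tendsto (fun t : ℝ => t ^ a * Real.exp (δ * t)) atTop (nhds 0) := by
  have h1 : Tendsto (fun t : ℝ => -δ * t) atTop atTop :=
    Tendsto.const_mul_atTop (by linarith) tendsto_id
  have h2 := (Real.tendsto_pow_mul_exp_neg_atTop_nhds_zero a).comp h1
  have h3 := h2.const_mul (((-δ) ^ a)⁻¹)
  rw [mul_zero] at h3
  refine h3.congr (fun t => ?_)
  have hne : ((-δ) ^ a : ℝ) ≠ 0 := pow_ne_zero _ (by linarith)
  simp only [Function.comp_apply]
  rw [mul_pow]
  have : -(-δ * t) = δ * t := by ring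
  rw [this]
  field_simp

private lemma aux_tendsto (a b : ℕ) (δ : ℝ) (h : δ < 0 ∨ (δ = 0 ∧ a < b)) :
    Tendsto (fun t : ℝ => t ^ a / t ^ b * Real.exp (δ * t)) atTop (nhds 0) := by
  rcases h with hδ | ⟨hδ, hab⟩
  · refine squeeze_zero_norm' ?_ (aux_pow_exp a δ hδ)
    filter_upwards [eventually_ge_atTop (1 : ℝ)] with t ht
    have ht0 : (0:ℝ) < t := by linarith
    have h1 : t ^ a / t ^ b ≤ t ^ a :=
      div_le_self (pow_nonneg ht0.le _) (one_le_pow₀ ht)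
    have h2 : (0:ℝ) ≤ t ^ a / t ^ b * Real.exp (δ * t) :=
      mul_nonneg (div_nonneg (pow_nonneg ht0.le _) (pow_nonneg ht0.le _)) (Real.exp_pos _).le
    rw [Real.norm_eq_abs, abs_of_nonneg h2]
    exact mul_le_mul_of_nonneg_right h1 (Real.exp_pos _).le
  · subst hδ
    have h1 : Tendsto (fun t : ℝ => (t ^ (b - a))⁻¹) atTop (nhds 0) :=
      (tendsto_pow_atTop (by omega)).inv_tendsto_atTop
    refine h1.congr' ?_
    filter_upwards [eventually_gt_atTop (0 : ℝ)] with t ht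
    have htne : t ≠ 0 := ne_of_gt ht
    rw [zero_mul, Real.exp_zero, mul_one, show b = (b - a) + a from by omega, pow_add,
      mul_comm, ← div_div, div_self (pow_ne_zero _ htne), one_div]
    simp only [show b - a + a - a = b - a from by omega]

private lemma coef_tendsto (ν m : ℕ) (α : ℝ) (μ : ℂ)
    (h : μ.re < α ∨ (μ.re = α ∧ m < ν)) :
    Tendsto (fun t : ℝ =>
      ((((t ^ ν)⁻¹ * Real.exp (-(α * t)) : ℝ)) : ℂ) * Complex.exp ((t : ℂ) * μ) *
        ((t : ℂ) ^ m * (Nat.factorial m : ℂ)⁻¹)) atTop (nhds 0) := by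
  rw [tendsto_zero_iff_norm_tendsto_zero]
  have haux := (aux_tendsto m ν (μ.re - α)
    (by rcases h with h | ⟨h, hm⟩
        · left; linarith
        · right; exact ⟨by linarith, hm⟩)).mul_const ((Nat.factorial m : ℝ)⁻¹)
  rw [zero_mul] at haux
  refine haux.congr' ?_
  filter_upwards [eventually_gt_atTop (0 : ℝ)] with t ht
  have htν : (0:ℝ) < t ^ ν := pow_pos ht _
  rw [norm_mul, norm_mul]
  rw [Complex.norm_exp]
  have hre : ((t : ℂ) * μ).re = t * μ.re := by simp [Complex.mul_re]
  rw [hre]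
  simp only [Complex.norm_real, norm_mul, norm_pow, norm_inv, Complex.norm_natCast,
    Real.norm_eq_abs, Real.abs_exp, abs_inv, abs_pow, abs_of_pos ht, Nat.abs_cast]
  rw [show (μ.re - α) * t = t * μ.re + -(α * t) by ring, Real.exp_add, div_eq_mul_inv]
  ring

private lemma exp_apply_eq_sum {X : Type*} [NormedAddCommGroup X] [NormedSpace ℂ X]
    [FiniteDimensional ℂ X] (A : X →L[ℂ] X) (μ : ℂ) (N : ℕ) (x : X)
    (hx : ((A - μ • (1 : X →L[ℂ] X)) ^ N) x = 0) (t : ℝ) :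
    NormedSpace.exp (t • A) x = Complex.exp ((t : ℂ) * μ) •
      ∑ m ∈ Finset.range N,
        ((t : ℂ) ^ m * (Nat.factorial m : ℂ)⁻¹) • ((A - μ • (1 : X →L[ℂ] X)) ^ m) x := by
  set B : X →L[ℂ] X := A - μ • 1 with hB
  have hA : t • A = ((t : ℂ) * μ) • (1 : X →L[ℂ] X) + t • B := by
    rw [hB, smul_sub]
    have : t • (μ • (1 : X →L[ℂ] X)) = ((t : ℂ) * μ) • 1 := by
      rw [← Complex.coe_smul, smul_smul]
    rw [this]
    abel
  have comm : Commute (((t : ℂ) * μ) • (1 : X →L[ℂ] X)) (t • B) :=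
    ((Commute.one_left (t • B)).smul_left _)
  let +nondep : NormedAlgebra ℚ (X →L[ℂ] X) := .restrictScalars ℚ ℂ (X →L[ℂ] X)
  rw [hA, NormedSpace.exp_add_of_commute comm]
  have h1 : NormedSpace.exp (((t : ℂ) * μ) • (1 : X →L[ℂ] X)) =
      Complex.exp ((t : ℂ) * μ) • (1 : X →L[ℂ] X) := by
    rw [Complex.exp_eq_exp_ℂ, ← Algebra.algebraMap_eq_smul_one, ← Algebra.algebraMap_eq_smul_one,
      NormedSpace.algebraMap_exp_comm]
  rw [h1, smul_mul_assoc, one_mul, ContinuousLinearMap.smul_apply]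
  congr 1
  rw [NormedSpace.exp_eq_tsum ℂ]
  have hs : Summable (fun n : ℕ => ((Nat.factorial n : ℂ)⁻¹) • (t • B) ^ n) := by
    have := NormedSpace.expSeries_summable' (𝕂 := ℂ) (t • B)
    simpa using this
  have happ : (∑' n : ℕ, ((Nat.factorial n : ℂ)⁻¹) • (t • B) ^ n) x =
      ∑' n : ℕ, (((Nat.factorial n : ℂ)⁻¹) • (t • B) ^ n) x := by
    exact ContinuousLinearMap.map_tsum (ContinuousLinearMap.apply ℂ X x) hs
  rw [happ]
  have hterm : ∀ n : ℕ, (((Nat.factorial n : ℂ))⁻¹ • (t • B) ^ n) x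
      = ((t : ℂ) ^ n * (Nat.factorial n : ℂ)⁻¹) • (B ^ n) x := by
    intro n
    rw [smul_pow, ContinuousLinearMap.smul_apply, ContinuousLinearMap.smul_apply,
      ← Complex.coe_smul, smul_smul, Complex.ofReal_pow, mul_comm]
  have hvanish : ∀ n ∉ Finset.range N,
      (((Nat.factorial n : ℂ))⁻¹ • (t • B) ^ n) x = 0 := by
    intro n hn
    have hNn : N ≤ n := by simpa using hn
    have hpow : B ^ n = B ^ (n - N) * B ^ N := by
      rw [← pow_add]; congr 1; omega
    rw [hterm, hpow, ContinuousLinearMap.mul_apply, hx, map_zero, smul_zero]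
  rw [tsum_eq_sum hvanish]
  exact Finset.sum_congr rfl fun n _ => hterm n


/-- asymptotic behaviour of solutions of `ẋ = Ax` on a finite-dimensional
complex normed space: for every `x₀ ≠ 0` there are `α ∈ ℝ`, `ν ≥ 0`, `k ≥ 1`, nonzero
coefficients `c i`, reals `β i` and linearly independent eigenvectors `w i` of `A` for the
eigenvalues `α + i β i`, such that
`‖t^{-ν} e^{-αt} exp(tA) x₀ - ∑ c i e^{i β i t} w i‖ → 0` as `t → +∞`. -/
theorem asymptotics_of_linear_ode_finiteDimensional
    {X : Type*} [NormedAddCommGroup X] [NormedSpace ℂ X] [FiniteDimensional ℂ X]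
    (A : X →L[ℂ] X) :
    ∀ x₀ : X, x₀ ≠ 0 →
      ∃ (α : ℝ) (ν : ℕ) (k : ℕ), 1 ≤ k ∧
        ∃ (c : Fin k → ℂ) (β : Fin k → ℝ) (w : Fin k → X),
          (∀ i, c i ≠ 0) ∧
          LinearIndependent ℂ w ∧
          (∀ i, A (w i) = ((α : ℂ) + (β i : ℂ) * Complex.I) • w i) ∧
          Tendsto
            (fun t : ℝ =>
              ‖(t ^ ν)⁻¹ • Real.exp (-(α * t)) • (NormedSpace.exp (t • A)) x₀ -
                ∑ i, (c i * Complex.exp ((β i * t : ℝ) * Complex.I)) • w i‖)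
            atTop (nhds 0) := by
  intro x₀ hx₀
  classical
  have htop := Module.End.iSup_maxGenEigenspace_eq_top (K := ℂ) (V := X) (A : X →ₗ[ℂ] X)
  have hx₀' : x₀ ∈ ⨆ μ : ℂ, Module.End.maxGenEigenspace (A : X →ₗ[ℂ] X) μ := by
    rw [htop]; trivial
  obtain ⟨f, hfmem, hfsum⟩ := (Submodule.mem_iSup_iff_exists_finsupp _ x₀).mp hx₀'
  set s : Finset ℂ := f.support with hs
  have hsum0 : ∑ μ ∈ s, f μ = x₀ := by rw [← hfsum]; rfl
  have hsne : s.Nonempty := by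
    by_contra h
    rw [Finset.not_nonempty_iff_eq_empty] at h
    exact hx₀ (by rw [← hsum0, h, Finset.sum_empty])
  set Bop : ℂ → (X →L[ℂ] X) := fun μ => A - μ • 1 with hBop
  have hcoe : ∀ (μ : ℂ) (k : ℕ) (y : X),
      ((Bop μ) ^ k) y = ((((A : X →ₗ[ℂ] X) - μ • 1) ^ k)) y := by
    intro μ k
    induction k with
    | zero => intro y; simp
    | succ k ih =>
      intro y
      have hby : (Bop μ) y = ((A : X →ₗ[ℂ] X) - μ • 1) y := by
        simp [hBop]
      rw [pow_succ, pow_succ, ContinuousLinearMap.mul_apply, Module.End.mul_apply, ← hby, ih]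
  have hNex : ∀ μ : ℂ, ∃ k : ℕ, ((Bop μ) ^ k) (f μ) = 0 := by
    intro μ
    obtain ⟨k, hk⟩ := (Module.End.mem_maxGenEigenspace _ _ _).mp (hfmem μ)
    exact ⟨k, by rw [hcoe]; exact hk⟩
  choose nfun hnfun using hNex
  set N : ℕ := (s.sup nfun) + 1 with hN
  have hBN : ∀ μ ∈ s, ((Bop μ) ^ N) (f μ) = 0 := by
    intro μ hμ
    have h1 : nfun μ ≤ N := le_trans (Finset.le_sup hμ) (Nat.le_succ _)
    have hpow : (Bop μ) ^ N = (Bop μ) ^ (N - nfun μ) * (Bop μ) ^ (nfun μ) := by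
      rw [← pow_add]; congr 1; omega
    rw [hpow, ContinuousLinearMap.mul_apply, hnfun, map_zero]
  have hxvne : ∀ μ ∈ s, f μ ≠ 0 := fun μ hμ => Finsupp.mem_support_iff.mp hμ
  set α : ℝ := s.sup' hsne (fun μ => μ.re) with hα
  have hre_le : ∀ μ ∈ s, μ.re ≤ α := fun μ hμ => Finset.le_sup' _ hμ
  obtain ⟨μ₀, hμ₀s, hμ₀⟩ := s.exists_mem_eq_sup' hsne (fun μ => μ.re)
  set T : Finset ℂ := s.filter (fun μ => μ.re = α) with hT
  have hTne : T.Nonempty := ⟨μ₀, Finset.mem_filter.mpr ⟨hμ₀s, hμ₀.symm⟩⟩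
  set deg : ℂ → ℕ := fun μ => Nat.findGreatest (fun m => ((Bop μ) ^ m) (f μ) ≠ 0) N with hdeg
  set ν : ℕ := T.sup' hTne deg with hν
  set s' : Finset ℂ := T.filter (fun μ => deg μ = ν) with hs'
  obtain ⟨μ₁, hμ₁T, hμ₁⟩ := T.exists_mem_eq_sup' hTne deg
  have hs'ne : s'.Nonempty := ⟨μ₁, Finset.mem_filter.mpr ⟨hμ₁T, hμ₁.symm⟩⟩
  have hs'subT : s' ⊆ T := Finset.filter_subset _ _
  have hTsubs : T ⊆ s := Finset.filter_subset _ _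
  have hdegP : ∀ μ ∈ s, ((Bop μ) ^ (deg μ)) (f μ) ≠ 0 := by
    intro μ hμ
    have h0 : (fun m => ((Bop μ) ^ m) (f μ) ≠ 0) 0 := by simpa using hxvne μ hμ
    have h1 := Nat.findGreatest_spec (P := fun m => ((Bop μ) ^ m) (f μ) ≠ 0) (Nat.zero_le N) h0
    simpa [hdeg] using h1
  have hdegN : ∀ μ ∈ s, deg μ < N := by
    intro μ hμ
    have hle : deg μ ≤ N := Nat.findGreatest_le _
    rcases lt_or_eq_of_le hle with h | heq
    · exact h
    · exfalso; exact hdegP μ hμ (by rw [heq]; exact hBN μ hμ)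
  have hdeg_zero : ∀ μ ∈ s, ∀ m, deg μ < m → ((Bop μ) ^ m) (f μ) = 0 := by
    intro μ hμ m hm
    by_cases hmN : m ≤ N
    · by_contra hne
      exact Nat.findGreatest_is_greatest hm hmN hne
    · push_neg at hmN
      have hpow : (Bop μ) ^ m = (Bop μ) ^ (m - N) * (Bop μ) ^ N := by
        rw [← pow_add]; congr 1; omega
      rw [hpow, ContinuousLinearMap.mul_apply, hBN μ hμ, map_zero]
  have hνN : ν < N := by
    have := hdegN μ₁ (hTsubs hμ₁T)
    omega
  have hdeg_le_ν : ∀ μ ∈ T, deg μ ≤ ν := fun μ hμ => Finset.le_sup' _ hμ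
  have hs'P : ∀ μ ∈ s', ((Bop μ) ^ ν) (f μ) ≠ 0 := by
    intro μ hμ
    obtain ⟨hμT, hd⟩ := Finset.mem_filter.mp hμ
    rw [← hd]
    exact hdegP μ (hTsubs hμT)
  have hs're : ∀ μ ∈ s', μ.re = α := fun μ hμ => (Finset.mem_filter.mp (hs'subT hμ)).2
  have hs'zero : ∀ μ ∈ s', ((Bop μ) ^ (ν + 1)) (f μ) = 0 := by
    intro μ hμ
    obtain ⟨hμT, hd⟩ := Finset.mem_filter.mp hμ
    exact hdeg_zero μ (hTsubs hμT) (ν + 1) (by omega)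
  have heig : ∀ μ ∈ s', A (((Bop μ) ^ ν) (f μ)) = μ • (((Bop μ) ^ ν) (f μ)) := by
    intro μ hμ
    have h0 := hs'zero μ hμ
    rw [pow_succ', ContinuousLinearMap.mul_apply] at h0
    have : (Bop μ) (((Bop μ) ^ ν) (f μ))
        = A (((Bop μ) ^ ν) (f μ)) - μ • (((Bop μ) ^ ν) (f μ)) := by
      simp [hBop]
    rw [this] at h0
    exact sub_eq_zero.mp h0
  set k : ℕ := s'.card with hk
  have hk1 : 1 ≤ k := Finset.card_pos.mpr hs'ne
  set e : Fin k ≃ {μ // μ ∈ s'} :=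
    ((Fintype.equivFin {μ // μ ∈ s'}).trans (finCongr (Fintype.card_coe s'))).symm with he
  set c : Fin k → ℂ := fun _ => ((Nat.factorial ν : ℂ))⁻¹ with hc
  set β : Fin k → ℝ := fun i => ((e i : ℂ)).im with hβ
  set w : Fin k → X := fun i => ((Bop (e i)) ^ ν) (f (e i)) with hw
  have hμeq : ∀ i : Fin k, (α : ℂ) + (β i : ℂ) * Complex.I = ((e i : ℂ)) := by
    intro i
    rw [hβ]
    rw [← hs're (e i) (e i).2]
    exact Complex.re_add_im _
  refine ⟨α, ν, k, hk1, c, β, w, ?_, ?_, ?_, ?_⟩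
  · intro i
    rw [hc]
    exact inv_ne_zero (by exact_mod_cast Nat.factorial_ne_zero ν)
  · have hinj : Function.Injective (fun i : Fin k => ((α : ℂ) + (β i : ℂ) * Complex.I)) := by
      intro i j hij
      simp only [hμeq] at hij
      exact e.injective (Subtype.coe_injective hij)
    refine Module.End.eigenvectors_linearIndependent' (A : X →ₗ[ℂ] X)
      (fun i => (α : ℂ) + (β i : ℂ) * Complex.I) hinj w ?_
    intro i
    constructor
    · rw [Module.End.mem_eigenspace_iff]
      show (A : X →ₗ[ℂ] X) (w i) = ((α : ℂ) + (β i : ℂ) * Complex.I) • w i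
      rw [ContinuousLinearMap.coe_coe, hμeq, hw]
      exact heig (e i) (e i).2
    · rw [hw]; exact hs'P (e i) (e i).2
  · intro i
    rw [hμeq, hw]
    exact heig (e i) (e i).2
  · -- the limit
    set lead : ℂ → ℝ → X := fun μ t =>
      (((Nat.factorial ν : ℂ))⁻¹ * Complex.exp (((μ.im * t : ℝ)) * Complex.I)) •
        ((Bop μ) ^ ν) (f μ) with hlead
    set coefFn : ℂ → ℕ → ℝ → ℂ := fun μ m t =>
      ((((t ^ ν)⁻¹ * Real.exp (-(α * t)) : ℝ)) : ℂ) * Complex.exp ((t : ℂ) * μ) *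
        ((t : ℂ) ^ m * (Nat.factorial m : ℂ)⁻¹) with hcoefFn
    set term : ℂ → ℕ → ℝ → X := fun μ m t =>
      coefFn μ m t • ((Bop μ) ^ m) (f μ) -
        (if μ ∈ s' then (if m = ν then lead μ t else 0) else 0) with hterm
    have hGeq : ∀ t : ℝ,
        ((t ^ ν)⁻¹ • Real.exp (-(α * t)) • (NormedSpace.exp (t • A)) x₀ -
          ∑ i, (c i * Complex.exp ((β i * t : ℝ) * Complex.I)) • w i)
          = ∑ μ ∈ s, ∑ m ∈ Finset.range N, term μ m t := by
      intro t
      have hexp : (NormedSpace.exp (t • A)) x₀ = ∑ μ ∈ s, Complex.exp ((t : ℂ) * μ) •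
          (∑ m ∈ Finset.range N,
            ((t : ℂ) ^ m * (Nat.factorial m : ℂ)⁻¹) • ((Bop μ) ^ m) (f μ)) := by
        conv_lhs => rw [← hsum0, map_sum]
        exact Finset.sum_congr rfl fun μ hμ => exp_apply_eq_sum A μ N (f μ) (hBN μ hμ) t
      have hL : (t ^ ν)⁻¹ • Real.exp (-(α * t)) • (NormedSpace.exp (t • A)) x₀
          = ∑ μ ∈ s, ∑ m ∈ Finset.range N, coefFn μ m t • ((Bop μ) ^ m) (f μ) := by
        rw [hexp, Finset.smul_sum, Finset.smul_sum]
        refine Finset.sum_congr rfl fun μ hμ => ?_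
        rw [Finset.smul_sum, Finset.smul_sum, Finset.smul_sum]
        refine Finset.sum_congr rfl fun m hm => ?_
        rw [hcoefFn, ← Complex.coe_smul ((t ^ ν)⁻¹), ← Complex.coe_smul (Real.exp _),
          smul_smul, smul_smul, smul_smul]
        congr 1
        push_cast
        ring
      have hR : (∑ i, (c i * Complex.exp ((β i * t : ℝ) * Complex.I)) • w i)
          = ∑ μ ∈ s', lead μ t := by
        rw [← Finset.sum_coe_sort s' (fun μ => lead μ t),
          ← Equiv.sum_comp e (fun x : {μ // μ ∈ s'} => lead (x : ℂ) t)]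
      have hR2 : ∑ μ ∈ s', lead μ t = ∑ μ ∈ s, ∑ m ∈ Finset.range N,
          (if μ ∈ s' then (if m = ν then lead μ t else 0) else 0) := by
        have h1 : ∀ μ ∈ s, (∑ m ∈ Finset.range N,
            (if μ ∈ s' then (if m = ν then lead μ t else 0) else 0))
            = if μ ∈ s' then lead μ t else 0 := by
          intro μ hμ
          by_cases hμ' : μ ∈ s'
          · simp only [hμ', if_true]
            rw [Finset.sum_ite_eq' (Finset.range N) ν (fun _ => lead μ t)]
            simp [Finset.mem_range.mpr hνN]
          · simp [hμ']
        rw [Finset.sum_congr rfl h1, ← Finset.sum_filter]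
        have h2 : s.filter (fun μ => μ ∈ s') = s' := by
          ext μ
          simp only [Finset.mem_filter]
          exact ⟨fun h => h.2, fun h => ⟨hTsubs (hs'subT h), h⟩⟩
        rw [h2]
      rw [hL, hR, hR2, ← Finset.sum_sub_distrib]
      exact Finset.sum_congr rfl fun μ _ => (Finset.sum_sub_distrib _ _).symm
    have htend : ∀ μ ∈ s, ∀ m ∈ Finset.range N,
        Tendsto (fun t => term μ m t) atTop (nhds 0) := by
      intro μ hμ m hm
      by_cases hcond : μ ∈ s' ∧ m = ν
      · obtain ⟨hμ', rfl⟩ := hcond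
        refine Tendsto.congr' ?_ (tendsto_const_nhds : Tendsto (fun _ : ℝ => (0:X)) atTop (nhds 0))
        filter_upwards [eventually_gt_atTop (0 : ℝ)] with t ht
        have hfac : ((Nat.factorial ν : ℂ)) ≠ 0 := by
          exact_mod_cast Nat.factorial_ne_zero ν
        have htm : ((t : ℂ) ^ ν) ≠ 0 := pow_ne_zero _ (by exact_mod_cast ne_of_gt ht)
        have hargeq : (-((α : ℂ) * (t : ℂ)) + (t : ℂ) * μ)
            = ((μ.im : ℂ) * (t : ℂ)) * Complex.I := by
          have hre : μ.re = α := hs're μ hμ'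
          apply Complex.ext <;>
            simp [Complex.add_re, Complex.add_im, Complex.mul_re, Complex.mul_im, hre] <;>
            ring
        have h2 : Complex.exp (-((α : ℂ) * (t : ℂ))) * Complex.exp ((t : ℂ) * μ)
            = Complex.exp (((μ.im : ℂ) * (t : ℂ)) * Complex.I) := by
          rw [← Complex.exp_add, hargeq]
        have hcoefeq : coefFn μ ν t
            = ((Nat.factorial ν : ℂ))⁻¹ * Complex.exp (((μ.im * t : ℝ)) * Complex.I) := by
          rw [hcoefFn]
          push_cast
          rw [← h2]
          field_simp
        rw [hterm]
        simp only [hμ', if_true, if_pos rfl]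
        rw [hcoefeq, hlead]
        simp
      · have hterm_eq : (fun t => term μ m t)
            = fun t => coefFn μ m t • ((Bop μ) ^ m) (f μ) := by
          funext t
          rw [hterm]
          rcases Classical.em (μ ∈ s') with h1 | h1
          · have h2 : m ≠ ν := fun h => hcond ⟨h1, h⟩
            simp [h1, h2]
          · simp [h1]
        rw [hterm_eq]
        by_cases hv : ((Bop μ) ^ m) (f μ) = 0
        · rw [hv]
          simp only [smul_zero]
          exact tendsto_const_nhds
        · have hcase : μ.re < α ∨ (μ.re = α ∧ m < ν) := by
            have hmle : m ≤ deg μ := by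
              by_contra hgt
              push_neg at hgt
              exact hv (hdeg_zero μ hμ m hgt)
            rcases lt_or_eq_of_le (hre_le μ hμ) with h | h
            · exact Or.inl h
            · right
              refine ⟨h, ?_⟩
              have hμT : μ ∈ T := Finset.mem_filter.mpr ⟨hμ, h⟩
              have h3 : deg μ ≤ ν := hdeg_le_ν μ hμT
              have h4 : m ≤ ν := le_trans hmle h3
              rcases lt_or_eq_of_le h4 with h5 | h5
              · exact h5
              · exfalso
                have hd : deg μ = ν := le_antisymm h3 (h5 ▸ hmle)
                exact hcond ⟨Finset.mem_filter.mpr ⟨hμT, hd⟩, h5⟩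
          have h6 := (coef_tendsto ν m α μ hcase).smul_const (((Bop μ) ^ m) (f μ))
          rw [zero_smul] at h6
          exact h6
    have htends : Tendsto (fun t => ∑ μ ∈ s, ∑ m ∈ Finset.range N, term μ m t)
        atTop (nhds 0) := by
      have h7 := tendsto_finset_sum s
        (fun μ hμ => tendsto_finset_sum (Finset.range N) (fun m hm => htend μ hμ m hm))
      simpa using h7
    have hfinal : Tendsto
        (fun t : ℝ => (t ^ ν)⁻¹ • Real.exp (-(α * t)) • (NormedSpace.exp (t • A)) x₀ -
          ∑ i, (c i * Complex.exp ((β i * t : ℝ) * Complex.I)) • w i) atTop (nhds 0) :=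
      htends.congr (fun t => (hGeq t).symm)
    exact tendsto_zero_iff_norm_tendsto_zero.mp hfinal
end

section
/- Let X be a complex Banach space and let P be a solid cone in X. If a bounded linear operator A on X satisfies A(P \ {θ}) ⊆ int P, then P contains no eigenvector of A associated with a positive real eigenvalue: there is no pair (ξ, r) with ξ ∈ P, ξ ≠ θ, r ∈ ℝ, r > 0, and A ξ = r ξ. -/
/-- if a bounded operator `A` on a complex Banach space with a solid cone `P`
satisfies `A (P \ {0}) ⊆ interior P`, then `P` contains no eigenvector of `A` for a
positive real eigenvalue. -/
theorem no_positive_eigenvector_in_cone_of_complex_strong_positivity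
    {X : Type*} [NormedAddCommGroup X] [NormedSpace ℂ X] [CompleteSpace X]
    (P : Set X) (hP : IsSolidCone P)
    (A : X →L[ℂ] X) (hA : ∀ x ∈ P, x ≠ 0 → A x ∈ interior P) :
    ¬ ∃ (ξ : X) (r : ℝ), ξ ∈ P ∧ ξ ≠ 0 ∧ 0 < r ∧ A ξ = (r : ℂ) • ξ := by
  obtain ⟨⟨hclosed, hconv, hne, hscale, hcap⟩, hint⟩ := hP
  rintro ⟨ξ, r, hξP, hξ0, hr, hAξ⟩
  -- positive real scaling preserves the interior of P
  have smul_int : ∀ c : ℝ, 0 < c → ∀ x ∈ interior P, c • x ∈ interior P := by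
    intro c hc x hx
    have hopen : IsOpen ((fun y : X => c • y) '' interior P) :=
      (isOpenMap_smul₀ (ne_of_gt hc)) _ isOpen_interior
    have hsub : (fun y : X => c • y) '' interior P ⊆ P := by
      rintro _ ⟨y, hy, rfl⟩
      exact hscale c hc.le y (interior_subset hy)
    exact interior_maximal hsub hopen ⟨x, hx, rfl⟩
  -- any rotation of ξ that is in P is in fact in the interior of P
  have key : ∀ z : ℂ, z ≠ 0 → z • ξ ∈ P → z • ξ ∈ interior P := by
    intro z hz hzP
    have hzξ : z • ξ ≠ 0 := smul_ne_zero hz hξ0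
    have h1 : A (z • ξ) ∈ interior P := hA _ hzP hzξ
    have h2 : A (z • ξ) = (r : ℝ) • (z • ξ) := by
      rw [map_smul, hAξ, smul_comm]
      simp [Complex.coe_smul]
    rw [h2] at h1
    have := smul_int r⁻¹ (by positivity) _ h1
    rwa [smul_smul, inv_mul_cancel₀ (ne_of_gt hr), one_smul] at this
  -- the set of angles whose rotation of ξ is in P is clopen and nonempty
  set f : ℝ → X := fun t => Complex.exp (t * Complex.I) • ξ with hf
  have hfc : Continuous f := by
    exact (Complex.continuous_exp.comp (by continuity)).smul continuous_const
  set S : Set ℝ := f ⁻¹' P with hS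
  have hSclosed : IsClosed S := hclosed.preimage hfc
  have hSopen : IsOpen S := by
    rw [isOpen_iff_mem_nhds]
    intro t ht
    have hmem : f t ∈ interior P := key _ (Complex.exp_ne_zero _) ht
    have : f ⁻¹' interior P ∈ nhds t :=
      hfc.continuousAt.preimage_mem_nhds (isOpen_interior.mem_nhds hmem)
    exact Filter.mem_of_superset this (Set.preimage_mono interior_subset)
  have hSne : S.Nonempty := ⟨0, by simp [hS, hf]; simpa using hξP⟩
  have hSuniv : S = Set.univ := IsClopen.eq_univ ⟨hSclosed, hSopen⟩ hSne
  -- π ∈ S gives -ξ ∈ P, contradiction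
  have hπ : f Real.pi ∈ P := by
    have : (Real.pi : ℝ) ∈ S := hSuniv ▸ Set.mem_univ _
    exact this
  have hneg : -ξ ∈ P := by
    have : Complex.exp (Real.pi * Complex.I) = -1 := by
      simp [Complex.exp_pi_mul_I]
    simpa [hf, this] using hπ
  have : ξ ∈ P ∩ (-P) := ⟨hξP, by simpa [Set.mem_neg] using hneg⟩
  rw [hcap] at this
  exact hξ0 this
end

section
/- Let X be a complex Banach space, let P be a solid cone in X, and let A be a rotationally strongly positive bounded linear operator on X. Let Y be a closed A-invariant subspace of X (A Y ⊆ Y) such that P ∩ Y ≠ {θ}. Then P ∩ Y is a solid cone in Y: the interior of P ∩ Y relative to the subspace topology of Y is nonempty. -/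
/-- if `A` is rotationally strongly positive with respect to a solid cone `P`
and `Y` is a closed `A`-invariant subspace with `P ∩ Y ≠ {0}`, then `P ∩ Y` is a solid cone
in `Y`: its interior in the subspace topology of `Y` is nonempty. -/
theorem restricted_cone_is_solid_in_invariant_subspace
    {X : Type*} [NormedAddCommGroup X] [NormedSpace ℂ X] [CompleteSpace X]
    (P : Set X) (hP : IsSolidCone P)
    (A : X →L[ℂ] X) (hA : IsRotStronglyPositive P A)
    (Y : Submodule ℂ X) (hYclosed : IsClosed (Y : Set X))
    (hYinv : ∀ x ∈ Y, A x ∈ Y)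
    (hPY : P ∩ (Y : Set X) ≠ {0}) :
    (interior {y : Y | (y : X) ∈ P}).Nonempty := by
  have h0P : (0:X) ∈ P := by
    have h := hP.1.2.2.2.2
    have h0 : (0:X) ∈ P ∩ (-P) := by rw [h]; rfl
    exact h0.1
  have hex : ∃ x ∈ P ∩ (Y : Set X), x ≠ 0 := by
    by_contra h
    push_neg at h
    exact hPY (Set.eq_singleton_iff_unique_mem.mpr ⟨⟨h0P, Y.zero_mem⟩, fun x hx => h x hx⟩)
  obtain ⟨x, ⟨hxP, hxY⟩, hxne⟩ := hex
  obtain ⟨z, hz⟩ := hA.2 x hxP hxne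
  refine ⟨⟨z • A x, Y.smul_mem z (hYinv x hxY)⟩, ?_⟩
  exact mem_interior.mpr ⟨Subtype.val ⁻¹' interior P,
    fun w hw => show (w:X) ∈ P from interior_subset hw,
    isOpen_interior.preimage continuous_subtype_val, hz⟩
end
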